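/- arXiv:1811.07563 — 11 statements merged into one kernel-verified Lean document; each statement's English description precedes it below -/
import Mathlib

section
/- Let f be a profile that is positive everywhere, normalized by ∫_ℝ ρ(z) dz = 1, and such that f(z,v_k) → 0 as z → +∞ and as z → −∞ for every k. Then the tumbling flux I is differentiable on ℝ∖{0} and there exist positive numbers λ₊, μ₊, λ₋, μ₋ > 0 such that e^{λ₊ z} I′(z) → −μ₊ as z → +∞ and e^{−λ₋ z} I′(z) → μ₋ as z → −∞; in particular I′(z) < 0 for all sufficiently large z > 0 and I′(z) > 0 for all sufficiently negative z < 0. -/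
open Filter Topology Set Matrix Real

/-!
On each half-line the profile solves a constant-coefficient linear system
`w k * g' k = ∑ j, ω j * t j * g j - t k * g k`. Its adjoint has the explicit eigenvectors
`ω k * t k / (t k / w k - ξ)`, with eigenvalue `-ξ`, for `ξ = 0` and for every root `ξ` of the
secular function `∑ k, ω k / (t k / w k - ξ)`. There is a root between any two consecutive poles,
so these eigenvectors form a basis, and the tumbling flux and its derivative are finite sums of
exponentials `e^{-ξ z}`. Decay of the profile kills the modes with `ξ ≤ 0`, and positivity of the
flux forces the slowest surviving mode to have a positive coefficient `β`: then `λ = ξ` and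
`μ = ξ β`. The left half-line is the mirror image under `z ↦ -z`.
-/

lemma exists_eq_mul_exp_of_hasDerivAt {h : ℝ → ℝ} {ξ : ℝ}
    (hd : ∀ z ∈ Ioi (0 : ℝ), HasDerivAt h (-ξ * h z) z) :
    ∃ C, ∀ z ∈ Ioi (0 : ℝ), h z = C * exp (-ξ * z) := by
  have hconst : ∀ z ∈ Ioi (0 : ℝ), HasDerivAt (fun z => h z * exp (ξ * z)) 0 z := fun z hz =>
    ((hd z hz).fun_mul ((hasDerivAt_id' z).const_mul ξ).exp).congr_deriv (by ring)
  obtain ⟨C, hC⟩ := isOpen_Ioi.exists_is_const_of_deriv_eq_zero isPreconnected_Ioi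
    (fun z hz => (hconst z hz).differentiableAt.differentiableWithinAt)
    (fun z hz => (hconst z hz).deriv)
  refine ⟨C, fun z hz => ?_⟩
  rw [← hC z hz, mul_assoc, ← exp_add, neg_mul, add_neg_cancel, exp_zero, mul_one]

lemma pos_of_tendsto_mul_exp {C ξ : ℝ} (hC : C ≠ 0)
    (h : Tendsto (fun z => C * exp (-ξ * z)) atTop (𝓝 0)) : 0 < ξ := by
  by_contra! hξ
  refine hC (abs_nonpos_iff.1 (ge_of_tendsto (by simpa using h.abs) ?_))
  filter_upwards [eventually_ge_atTop 0] with z hz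
  exact le_mul_of_one_le_right (abs_nonneg C) (one_le_exp (by nlinarith))

lemma tendsto_exp_mul_sum_mul_exp {J : Type*} [Fintype J] (γ ξ : J → ℝ) (j : J)
    (hdom : ∀ i ≠ j, γ i ≠ 0 → ξ j < ξ i) :
    Tendsto (fun z => exp (ξ j * z) * ∑ i, γ i * exp (-ξ i * z)) atTop (𝓝 (γ j)) := by
  classical
  have hterm : ∀ i, Tendsto (fun z => γ i * exp ((ξ j - ξ i) * z)) atTop
      (𝓝 (if i = j then γ j else 0)) := by
    intro i
    split_ifs with hij
    · subst hij
      simp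
    by_cases hγ : γ i = 0
    · simp [hγ]
    simpa using (tendsto_exp_atBot.comp (tendsto_id.const_mul_atTop_of_neg
      (sub_neg.2 (hdom i hij hγ)))).const_mul (γ i)
  have hsum := tendsto_finsetSum Finset.univ fun i _ => hterm i
  rw [Finset.sum_ite_eq' Finset.univ j, if_pos (Finset.mem_univ j)] at hsum
  refine hsum.congr fun z => ?_
  rw [Finset.mul_sum]
  refine Finset.sum_congr rfl fun i _ => ?_
  rw [sub_mul, sub_eq_add_neg, exp_add, ← neg_mul]
  ring

lemma exists_tendsto_exp_mul_deriv_sum_exp {J : Type*} [Fintype J] (β ξ : J → ℝ)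
    (hξ : Function.Injective ξ) (hβ : ∀ j, β j ≠ 0 → 0 < ξ j)
    (hpos : ∀ᶠ z in atTop, 0 < ∑ j, β j * exp (-ξ j * z)) :
    ∃ l m, 0 < l ∧ 0 < m ∧
      Tendsto (fun z => exp (l * z) * ∑ j, -ξ j * β j * exp (-ξ j * z)) atTop (𝓝 (-m)) := by
  classical
  obtain ⟨z₀, hz₀⟩ := hpos.exists
  have hsupp : (Finset.univ.filter fun j => β j ≠ 0).Nonempty := by
    by_contra h
    simp only [Finset.not_nonempty_iff_eq_empty, Finset.filter_eq_empty_iff, Finset.mem_univ,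
      not_not, true_implies] at h
    simp [h] at hz₀
  obtain ⟨j, hj, hmin⟩ := Finset.exists_min_image _ ξ hsupp
  have hβj : β j ≠ 0 := (Finset.mem_filter.1 hj).2
  have hdom : ∀ i ≠ j, β i ≠ 0 → ξ j < ξ i := fun i hij hi =>
    (hmin i (by simpa using hi)).lt_of_ne (hξ.ne hij.symm)
  have hβpos : 0 < β j := by
    refine (ge_of_tendsto (tendsto_exp_mul_sum_mul_exp β ξ j hdom) ?_).lt_of_ne' hβj
    filter_upwards [hpos] with z hz using (mul_pos (exp_pos _) hz).le
  refine ⟨ξ j, ξ j * β j, hβ j hβj, mul_pos (hβ j hβj) hβpos, ?_⟩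
  simpa using tendsto_exp_mul_sum_mul_exp (fun i => -ξ i * β i) ξ j
    fun i hij hi => hdom i hij (right_ne_zero_of_mul hi)

section Secular

variable {ι : Type*} [Fintype ι] (ω p : ι → ℝ)

noncomputable def secular (x : ℝ) : ℝ := ∑ k, ω k / (p k - x)

variable {ω p}

lemma secular_eq_add_sum_erase [DecidableEq ι] (k : ι) (x : ℝ) :
    secular ω p x = ω k / (p k - x) + ∑ j ∈ Finset.univ.erase k, ω j / (p j - x) :=
  (Finset.add_sum_erase _ _ (Finset.mem_univ k)).symm

lemma continuousAt_sum_erase_div_sub [DecidableEq ι] (hp : Function.Injective p) (k : ι) :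
    ContinuousAt (fun x => ∑ j ∈ Finset.univ.erase k, ω j / (p j - x)) (p k) :=
  tendsto_finsetSum _ fun _ hj => continuousAt_const.div (continuousAt_const.sub continuousAt_id)
    (sub_ne_zero.2 (hp.ne (Finset.ne_of_mem_erase hj)))

lemma tendsto_const_sub_nhds_self (a : ℝ) : Tendsto (fun x => a - x) (𝓝 a) (𝓝 0) := by
  simpa using (continuous_sub_left a).tendsto a

lemma tendsto_secular_nhdsGT_atBot (hω : ∀ k, 0 < ω k) (hp : Function.Injective p) (k : ι) :
    Tendsto (secular ω p) (𝓝[>] (p k)) atBot := by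
  classical
  have hpole : Tendsto (fun x => p k - x) (𝓝[>] (p k)) (𝓝[<] 0) :=
    tendsto_nhdsWithin_iff.2 ⟨(tendsto_const_sub_nhds_self _).mono_left nhdsWithin_le_nhds,
      eventually_nhdsWithin_of_forall fun _ hx => mem_Iio.2 (sub_neg.2 hx)⟩
  have hsingular : Tendsto (fun x => ω k / (p k - x)) (𝓝[>] (p k)) atBot := by
    simpa only [div_eq_mul_inv, Pi.inv_apply] using
      hpole.inv_tendsto_nhdsLT_zero.const_mul_atBot (hω k)
  rw [show secular ω p = _ from funext (secular_eq_add_sum_erase k)]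
  exact hsingular.atBot_add ((continuousAt_sum_erase_div_sub hp k).tendsto.mono_left
    nhdsWithin_le_nhds)

lemma tendsto_secular_nhdsLT_atTop (hω : ∀ k, 0 < ω k) (hp : Function.Injective p) (k : ι) :
    Tendsto (secular ω p) (𝓝[<] (p k)) atTop := by
  classical
  have hpole : Tendsto (fun x => p k - x) (𝓝[<] (p k)) (𝓝[>] 0) :=
    tendsto_nhdsWithin_iff.2 ⟨(tendsto_const_sub_nhds_self _).mono_left nhdsWithin_le_nhds,
      eventually_nhdsWithin_of_forall fun _ hx => mem_Ioi.2 (sub_pos.2 hx)⟩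
  have hsingular : Tendsto (fun x => ω k / (p k - x)) (𝓝[<] (p k)) atTop := by
    simpa only [div_eq_mul_inv, Pi.inv_apply] using
      hpole.inv_tendsto_nhdsGT_zero.const_mul_atTop (hω k)
  rw [show secular ω p = _ from funext (secular_eq_add_sum_erase k)]
  exact hsingular.atTop_add ((continuousAt_sum_erase_div_sub hp k).tendsto.mono_left
    nhdsWithin_le_nhds)

lemma exists_secular_eq_zero_mem_Ioo (hω : ∀ k, 0 < ω k) (hp : Function.Injective p) {i j : ι}
    (hij : p i < p j) (hgap : ∀ k, p k ∉ Ioo (p i) (p j)) :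
    ∃ x ∈ Ioo (p i) (p j), secular ω p x = 0 := by
  have hcont : ContinuousOn (secular ω p) (Ioo (p i) (p j)) :=
    continuousOn_finsetSum _ fun k _ => continuousOn_const.div
      (continuousOn_const.sub continuousOn_id) fun _ hx h => hgap k (sub_eq_zero.1 h ▸ hx)
  exact isPreconnected_Ioo.intermediate_value_Iii (le_principal_iff.2 (Ioo_mem_nhdsGT hij))
    (le_principal_iff.2 (Ioo_mem_nhdsLT hij)) hcont (tendsto_secular_nhdsGT_atBot hω hp i)
    (tendsto_secular_nhdsLT_atTop hω hp j) (mem_univ 0)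

-- The largest pole is paired with the spectral value `0`, every other pole with a root of the
-- secular function lying before the next pole.
lemma exists_secular_root_or_zero (hω : ∀ k, 0 < ω k) (hp : Function.Injective p) (k : ι) :
    ∃ x, (x = 0 ∧ ∀ j, p j ≤ p k) ∨ (secular ω p x = 0 ∧ p k < x ∧ ∀ j, p k < p j → x < p j) := by
  classical
  by_cases hmax : ∃ j, p k < p j
  swap
  · exact ⟨0, .inl ⟨rfl, fun j => not_lt.1 fun hj => hmax ⟨j, hj⟩⟩⟩
  obtain ⟨j, hj, hjmin⟩ := (Finset.univ.filter fun j => p k < p j).exists_min_image p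
    (by simpa [Finset.Nonempty] using hmax)
  have hkj : p k < p j := (Finset.mem_filter.1 hj).2
  have hup : ∀ i, p k < p i → p j ≤ p i := fun i hi => hjmin i (by simpa using hi)
  obtain ⟨x, hx, hx0⟩ := exists_secular_eq_zero_mem_Ioo hω hp hkj
    fun i hi => (hup i hi.1).not_gt hi.2
  exact ⟨x, .inr ⟨hx0, hx.1, fun i hi => hx.2.trans_le (hup i hi)⟩⟩

lemma exists_injective_secular_roots (hω : ∀ k, 0 < ω k) (hp : Function.Injective p)
    (hp0 : ∀ k, p k ≠ 0) (h0 : secular ω p 0 ≠ 0) :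
    ∃ ξ : ι → ℝ, Function.Injective ξ ∧ (∀ k, ξ k * secular ω p (ξ k) = 0) ∧
      ∀ k j, p j ≠ ξ k := by
  choose ξ hξ using exists_secular_root_or_zero hω hp
  refine ⟨ξ, fun a b hab => ?_, fun k => ?_, fun k j => ?_⟩
  · rcases hξ a with ⟨ha, hamax⟩ | ⟨ha, hpa, hal⟩ <;> rcases hξ b with ⟨hb, hbmax⟩ | ⟨hb, hpb, hbl⟩
    · exact hp ((hbmax a).antisymm (hamax b))
    · exact (h0 (by rwa [← hab, ha] at hb)).elim
    · exact (h0 (by rwa [hab, hb] at ha)).elim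
    · by_contra hne
      rcases (hp.ne hne).lt_or_gt with h | h
      · linarith [hal b h]
      · linarith [hbl a h]
  · rcases hξ k with ⟨h, -⟩ | ⟨h, -⟩ <;> simp [h]
  · rcases hξ k with ⟨h, -⟩ | ⟨-, hpk, hkl⟩
    · exact h ▸ hp0 j
    · rcases le_or_gt (p j) (p k) with h | h
      · exact (h.trans_lt hpk).ne
      · exact (hkl j h).ne'

end Secular

section Tumbling

variable {ι : Type*}

noncomputable def tumbleEigenvector (ω t w : ι → ℝ) (ξ : ℝ) : ι → ℝ :=
  fun k => ω k * t k / ((t / w) k - ξ)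

lemma tumbleEigenvector_ne_zero [Nonempty ι] {ω t w : ι → ℝ} (hω : ∀ k, 0 < ω k)
    (ht : ∀ k, 0 < t k) {ξ : ℝ} (hξp : ∀ k, (t / w) k ≠ ξ) : tumbleEigenvector ω t w ξ ≠ 0 :=
  fun h => by
    obtain ⟨k⟩ := ‹Nonempty ι›
    exact div_ne_zero (mul_pos (hω k) (ht k)).ne' (sub_ne_zero.2 (hξp k)) (congrFun h k)

variable [Fintype ι] (ω t w : ι → ℝ)

-- With speeds `w k = v k - c` and rates `t k = T(z, v k - c)`, the kinetic equation reads
-- `g' = tumble ω t w g`.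
noncomputable def tumble (x : ι → ℝ) : ι → ℝ :=
  fun k => ((∑ j, ω j * t j * x j) - t k * x k) / w k

noncomputable def tumbleAdjoint : Module.End ℝ (ι → ℝ) where
  toFun u k := ω k * t k * ∑ j, u j / w j - t k / w k * u k
  map_add' u v := by
    funext k
    simp only [Pi.add_apply, add_div, Finset.sum_add_distrib]
    ring
  map_smul' r u := by
    funext k
    simp only [Pi.smul_apply, smul_eq_mul, RingHom.id_apply, mul_div_assoc, ← Finset.mul_sum]
    ring

lemma tumbleAdjoint_apply (u : ι → ℝ) (k : ι) :
    tumbleAdjoint ω t w u k = ω k * t k * ∑ j, u j / w j - t k / w k * u k := rfl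

lemma tumbleAdjoint_dotProduct (u x : ι → ℝ) :
    tumbleAdjoint ω t w u ⬝ᵥ x = u ⬝ᵥ tumble ω t w x := by
  simp only [dotProduct, tumbleAdjoint_apply, tumble]
  set S := ∑ j, ω j * t j * x j
  set U := ∑ j, u j / w j
  calc ∑ k, (ω k * t k * U - t k / w k * u k) * x k = U * S - ∑ k, u k * (t k * x k / w k) := by
        rw [Finset.mul_sum, ← Finset.sum_sub_distrib]
        exact Finset.sum_congr rfl fun k _ => by ring
    _ = ∑ k, u k * ((S - t k * x k) / w k) := by
        rw [mul_comm, Finset.mul_sum, ← Finset.sum_sub_distrib]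
        exact Finset.sum_congr rfl fun k _ => by ring

lemma hasDerivAt_dotProduct {g : ℝ → ι → ℝ} {g' : ι → ℝ} {z : ℝ} (u : ι → ℝ)
    (hg : ∀ k, HasDerivAt (fun z => g z k) (g' k) z) :
    HasDerivAt (fun z => u ⬝ᵥ g z) (u ⬝ᵥ g') z :=
  HasDerivAt.fun_sum fun k _ => (hg k).const_mul (u k)

variable {ω t w} {g : ℝ → ι → ℝ}

lemma tumbleAdjoint_tumbleEigenvector (hωs : ∑ k, ω k = 1) {ξ : ℝ}
    (hξ : ξ * secular ω (t / w) ξ = 0) (hξp : ∀ k, (t / w) k ≠ ξ) :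
    tumbleAdjoint ω t w (tumbleEigenvector ω t w ξ) = (-ξ) • tumbleEigenvector ω t w ξ := by
  have hsum : ∑ j, tumbleEigenvector ω t w ξ j / w j = 1 := by
    have hsplit : ∀ j, tumbleEigenvector ω t w ξ j / w j = ω j + ξ * (ω j / ((t / w) j - ξ)) := by
      intro j
      have := sub_ne_zero.2 (hξp j)
      simp only [tumbleEigenvector, Pi.div_apply] at this ⊢
      field_simp
      ring
    rw [Finset.sum_congr rfl fun j _ => hsplit j, Finset.sum_add_distrib, ← Finset.mul_sum, hωs]
    simpa [secular] using hξ
  funext k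
  have := sub_ne_zero.2 (hξp k)
  rw [tumbleAdjoint_apply, hsum]
  simp only [Pi.smul_apply, smul_eq_mul, tumbleEigenvector, Pi.div_apply] at this ⊢
  field_simp
  ring

lemma span_range_tumbleEigenvector_eq_top [Nonempty ι] (hω : ∀ k, 0 < ω k)
    (hωs : ∑ k, ω k = 1) (ht : ∀ k, 0 < t k) {ξ : ι → ℝ} (hξ : Function.Injective ξ)
    (hξroot : ∀ j, ξ j * secular ω (t / w) (ξ j) = 0) (hξp : ∀ j k, (t / w) k ≠ ξ j) :
    Submodule.span ℝ (range fun j => tumbleEigenvector ω t w (ξ j)) = ⊤ :=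
  ((tumbleAdjoint ω t w).eigenvectors_linearIndependent' (fun j => -ξ j) (neg_injective.comp hξ)
    _ fun j => ⟨Module.End.mem_eigenspace_iff.2
      (tumbleAdjoint_tumbleEigenvector hωs (hξroot j) (hξp j)),
      tumbleEigenvector_ne_zero hω ht (hξp j)⟩).span_eq_top_of_card_eq_finrank'
    (Module.finrank_fintype_fun_eq_card ℝ).symm

theorem exists_dotProduct_eq_sum_exp (hω : ∀ k, 0 < ω k) (hωs : ∑ k, ω k = 1)
    (ht : ∀ k, 0 < t k) {ξ : ι → ℝ} (hξ : Function.Injective ξ)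
    (hξroot : ∀ j, ξ j * secular ω (t / w) (ξ j) = 0) (hξp : ∀ j k, (t / w) k ≠ ξ j)
    (hgd : ∀ z > 0, ∀ k, HasDerivAt (fun z => g z k) (tumble ω t w (g z) k) z)
    (hgtop : ∀ k, Tendsto (fun z => g z k) atTop (𝓝 0)) (u : ι → ℝ) :
    ∃ β : ι → ℝ, (∀ j, β j ≠ 0 → 0 < ξ j) ∧ ∀ z > 0,
      u ⬝ᵥ g z = ∑ j, β j * exp (-ξ j * z) ∧
      u ⬝ᵥ tumble ω t w (g z) = ∑ j, -ξ j * β j * exp (-ξ j * z) := by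
  have : Nonempty ι := Finset.univ_nonempty_iff.1
    (Finset.nonempty_of_sum_ne_zero (hωs ▸ one_ne_zero))
  set φ : ι → ι → ℝ := fun j => tumbleEigenvector ω t w (ξ j)
  have heig : ∀ j, tumbleAdjoint ω t w (φ j) = (-ξ j) • φ j := fun j =>
    tumbleAdjoint_tumbleEigenvector hωs (hξroot j) (hξp j)
  obtain ⟨α, hα⟩ := (Submodule.mem_span_range_iff_exists_fun ℝ).1
    (span_range_tumbleEigenvector_eq_top hω hωs ht hξ hξroot hξp ▸ Submodule.mem_top :
      u ∈ Submodule.span ℝ (range φ))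
  have hmode : ∀ j, ∃ C, ∀ z ∈ Ioi (0 : ℝ), φ j ⬝ᵥ g z = C * exp (-ξ j * z) := fun j =>
    exists_eq_mul_exp_of_hasDerivAt fun z hz => by
      simpa only [← tumbleAdjoint_dotProduct, heig, smul_dotProduct, smul_eq_mul] using
        hasDerivAt_dotProduct (φ j) (hgd z hz)
  choose C hC using hmode
  have hCξ : ∀ j, C j ≠ 0 → 0 < ξ j := fun j hCj => by
    have hdecay : Tendsto (fun z => φ j ⬝ᵥ g z) atTop (𝓝 0) := by
      simpa [dotProduct] using tendsto_finsetSum Finset.univ fun k _ => (hgtop k).const_mul (φ j k)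
    refine pos_of_tendsto_mul_exp hCj (hdecay.congr' ?_)
    filter_upwards [eventually_gt_atTop 0] with z hz using hC j z hz
  refine ⟨fun j => α j * C j, fun j h => hCξ j (right_ne_zero_of_mul h), fun z hz => ⟨?_, ?_⟩⟩
  · rw [← hα, sum_dotProduct]
    exact Finset.sum_congr rfl fun j _ => by rw [smul_dotProduct, hC j z hz, smul_eq_mul]; ring
  · rw [← tumbleAdjoint_dotProduct, ← hα, map_sum, sum_dotProduct]
    refine Finset.sum_congr rfl fun j _ => ?_
    rw [map_smul, heig, smul_dotProduct, smul_dotProduct, hC j z hz, smul_eq_mul, smul_eq_mul]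
    ring

theorem exists_tendsto_exp_mul_dotProduct_tumble (hω : ∀ k, 0 < ω k) (hωs : ∑ k, ω k = 1)
    (ht : ∀ k, 0 < t k) (hw : ∀ k, w k ≠ 0) (hp : Function.Injective (t / w))
    (hadm : ∑ k, ω k * w k / t k ≠ 0)
    (hgd : ∀ z > 0, ∀ k, HasDerivAt (fun z => g z k) (tumble ω t w (g z) k) z)
    (hgpos : ∀ z > 0, ∀ k, 0 < g z k) (hgtop : ∀ k, Tendsto (fun z => g z k) atTop (𝓝 0)) :
    ∃ l m, 0 < l ∧ 0 < m ∧
      Tendsto (fun z => exp (l * z) * ((ω * t) ⬝ᵥ tumble ω t w (g z))) atTop (𝓝 (-m)) := by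
  -- admissibility: `0` is not a root of the secular function
  have h0 : secular ω (t / w) 0 ≠ 0 := by simpa [secular, div_div_eq_mul_div] using hadm
  obtain ⟨ξ, hξ, hξroot, hξp⟩ := exists_injective_secular_roots hω hp
    (fun k => div_ne_zero (ht k).ne' (hw k)) h0
  obtain ⟨β, hβ, hrepr⟩ := exists_dotProduct_eq_sum_exp hω hωs ht hξ hξroot hξp hgd hgtop (ω * t)
  obtain ⟨l, m, hl, hm, hlim⟩ := exists_tendsto_exp_mul_deriv_sum_exp β ξ hξ hβ <| by
    filter_upwards [eventually_gt_atTop 0] with z hz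
    rw [← (hrepr z hz).1]
    exact Finset.sum_pos (fun k _ => mul_pos (mul_pos (hω k) (ht k)) (hgpos z hz k))
      (Finset.nonempty_of_sum_ne_zero (hωs ▸ one_ne_zero))
  refine ⟨l, m, hl, hm, hlim.congr' ?_⟩
  filter_upwards [eventually_gt_atTop 0] with z hz
  rw [(hrepr z hz).2]

end Tumbling

section FinsetIndexed

variable {ι : Type*} (s : Finset ι) {ω t w : ι → ℝ} {g : ℝ → ι → ℝ}

theorem exists_tendsto_exp_mul_sum_tumble_atTop (hω : ∀ k ∈ s, 0 < ω k)
    (hωs : ∑ k ∈ s, ω k = 1) (ht : ∀ k ∈ s, 0 < t k) (hw : ∀ k ∈ s, w k ≠ 0)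
    (hp : InjOn (t / w) s) (hadm : ∑ k ∈ s, ω k * w k / t k ≠ 0)
    (hgd : ∀ z > 0, ∀ k ∈ s, HasDerivAt (fun z => g z k)
      (((∑ j ∈ s, ω j * t j * g z j) - t k * g z k) / w k) z)
    (hgpos : ∀ z > 0, ∀ k ∈ s, 0 < g z k)
    (hgtop : ∀ k ∈ s, Tendsto (fun z => g z k) atTop (𝓝 0)) :
    ∃ l m, 0 < l ∧ 0 < m ∧ Tendsto (fun z => exp (l * z) *
      ∑ k ∈ s, ω k * t k * (((∑ j ∈ s, ω j * t j * g z j) - t k * g z k) / w k))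
      atTop (𝓝 (-m)) := by
  have := exists_tendsto_exp_mul_dotProduct_tumble (ι := s) (ω := fun k => ω k)
    (t := fun k => t k) (w := fun k => w k) (g := fun z k => g z k) (fun k => hω k k.2)
    (by rwa [Finset.sum_coe_sort s ω]) (fun k => ht k k.2) (fun k => hw k k.2)
    (fun a b h => Subtype.ext (hp a.2 b.2 h))
    (by rwa [Finset.sum_coe_sort s fun k => ω k * w k / t k])
    (fun z hz k => by
      simpa only [tumble, Finset.sum_coe_sort s fun j => ω j * t j * g z j] using hgd z hz k k.2)
    (fun z hz k => hgpos z hz k k.2) (fun k => hgtop k k.2)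
  obtain ⟨l, m, hl, hm, hlim⟩ := this
  refine ⟨l, m, hl, hm, hlim.congr fun z => ?_⟩
  simp only [dotProduct, tumble, Pi.mul_apply]
  rw [Finset.sum_coe_sort s fun j => ω j * t j * g z j]
  exact congrArg _ (Finset.sum_coe_sort s fun k =>
    ω k * t k * (((∑ j ∈ s, ω j * t j * g z j) - t k * g z k) / w k))

theorem exists_tendsto_exp_mul_sum_tumble_atBot (hω : ∀ k ∈ s, 0 < ω k)
    (hωs : ∑ k ∈ s, ω k = 1) (ht : ∀ k ∈ s, 0 < t k) (hw : ∀ k ∈ s, w k ≠ 0)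
    (hp : InjOn (t / w) s) (hadm : ∑ k ∈ s, ω k * w k / t k ≠ 0)
    (hgd : ∀ z < 0, ∀ k ∈ s, HasDerivAt (fun z => g z k)
      (((∑ j ∈ s, ω j * t j * g z j) - t k * g z k) / w k) z)
    (hgpos : ∀ z < 0, ∀ k ∈ s, 0 < g z k)
    (hgbot : ∀ k ∈ s, Tendsto (fun z => g z k) atBot (𝓝 0)) :
    ∃ l m, 0 < l ∧ 0 < m ∧ Tendsto (fun z => exp (-l * z) *
      ∑ k ∈ s, ω k * t k * (((∑ j ∈ s, ω j * t j * g z j) - t k * g z k) / w k))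
      atBot (𝓝 m) := by
  obtain ⟨l, m, hl, hm, hlim⟩ := exists_tendsto_exp_mul_sum_tumble_atTop s (w := -w)
    (g := fun z k => g (-z) k) hω hωs ht (fun k hk => neg_ne_zero.2 (hw k hk))
    (fun a ha b hb h => hp ha hb (neg_inj.1 (by simpa [div_neg] using h)))
    (by simpa [mul_neg, neg_div, Finset.sum_neg_distrib] using hadm)
    (fun z hz k hk => ((hgd (-z) (neg_lt_zero.2 hz) k hk).comp z (hasDerivAt_neg z)).congr_deriv
      (by simp [div_neg]))
    (fun z hz k hk => hgpos (-z) (neg_lt_zero.2 hz) k hk)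
    (fun k hk => (hgbot k hk).comp tendsto_neg_atTop_atBot)
  refine ⟨l, m, hl, hm, ?_⟩
  have := (hlim.comp tendsto_neg_atBot_atTop).neg
  rw [neg_neg] at this
  refine this.congr fun z => ?_
  simp [div_neg, Finset.sum_neg_distrib]

end FinsetIndexed

lemma injOn_div_self_of_eq_ite {τ : ℝ → ℝ} {a b : ℝ} (ha : 0 < a) (hb : 0 < b)
    (hτ : ∀ u, τ u = if 0 < u then a else b) : InjOn (fun u => τ u / u) {u | u ≠ 0} := by
  have hcancel : ∀ {r x y : ℝ}, 0 < r → r / x = r / y → x = y := fun hr h =>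
    inv_injective (mul_left_cancel₀ hr.ne' (by simpa only [div_eq_mul_inv] using h))
  intro x hx y hy hxy
  simp only [hτ] at hxy
  rcases (hx : x ≠ 0).lt_or_gt with hx | hx <;> rcases (hy : y ≠ 0).lt_or_gt with hy | hy
  · simp only [if_neg hx.not_gt, if_neg hy.not_gt] at hxy
    exact hcancel hb hxy
  · simp only [if_neg hx.not_gt, if_pos hy] at hxy
    exact absurd hxy ((div_neg_of_pos_of_neg hb hx).trans (div_pos ha hy)).ne
  · simp only [if_pos hx, if_neg hy.not_gt] at hxy
    exact absurd hxy ((div_neg_of_pos_of_neg hb hy).trans (div_pos ha hx)).ne'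
  · simp only [if_pos hx, if_pos hy] at hxy
    exact hcancel ha hxy

theorem stmt1_general
    (K : ℕ)
    (v ω : ℤ → ℝ)
    (hvmono : ∀ j ∈ Finset.Icc (-(K:ℤ)) (K:ℤ), ∀ k ∈ Finset.Icc (-(K:ℤ)) (K:ℤ), j < k → v j < v k)
    (hwpos : ∀ k ∈ Finset.Icc (-(K:ℤ)) (K:ℤ), 0 < ω k)
    (hwsum : ∑ k ∈ Finset.Icc (-(K:ℤ)) (K:ℤ), ω k = 1)
    (χS χN : ℝ) (hχS : χS ∈ Set.Ioo 0 (1/2 : ℝ)) (hχN : χN ∈ Set.Ioo 0 (1/2 : ℝ))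
    (c : ℝ)
    (hcv : ∀ k ∈ Finset.Icc (-(K:ℤ)) (K:ℤ), c ≠ v k)
    (Tp Tm : ℝ → ℝ) (T : ℝ → ℝ → ℝ)
    (hTpdef : ∀ u : ℝ, Tp u = if 0 < u then 1 + χS - χN else 1 - χS + χN)
    (hTmdef : ∀ u : ℝ, Tm u = if 0 < u then 1 - χS - χN else 1 + χS + χN)
    (hTdef : ∀ z u : ℝ, T z u = if 0 < z then Tp u else Tm u)
    (hadmL : 0 < ∑ k ∈ Finset.Icc (-(K:ℤ)) (K:ℤ), ω k * (v k - c) / Tm (v k - c))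
    (hadmR : ∑ k ∈ Finset.Icc (-(K:ℤ)) (K:ℤ), ω k * (v k - c) / Tp (v k - c) < 0)
    (f : ℝ → ℤ → ℝ)
    (hfeq : ∀ z : ℝ, z ≠ 0 → ∀ k ∈ Finset.Icc (-(K:ℤ)) (K:ℤ),
      HasDerivAt (fun z' => f z' k)
        (((∑ k' ∈ Finset.Icc (-(K:ℤ)) (K:ℤ), ω k' * T z (v k' - c) * f z k') -
          T z (v k - c) * f z k) / (v k - c)) z)
    (hfpos : ∀ z : ℝ, ∀ k ∈ Finset.Icc (-(K:ℤ)) (K:ℤ), 0 < f z k)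
    (hftop : ∀ k ∈ Finset.Icc (-(K:ℤ)) (K:ℤ), Filter.Tendsto (fun z => f z k) Filter.atTop (nhds 0))
    (hfbot : ∀ k ∈ Finset.Icc (-(K:ℤ)) (K:ℤ), Filter.Tendsto (fun z => f z k) Filter.atBot (nhds 0)) :
    ∃ I' : ℝ → ℝ,
      (∀ z : ℝ, z ≠ 0 →
        HasDerivAt (fun z' => ∑ k ∈ Finset.Icc (-(K:ℤ)) (K:ℤ), ω k * T z' (v k - c) * f z' k) (I' z) z) ∧
      ∃ lp mp lm mm : ℝ, 0 < lp ∧ 0 < mp ∧ 0 < lm ∧ 0 < mm ∧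
        Filter.Tendsto (fun z => Real.exp (lp * z) * I' z) Filter.atTop (nhds (-mp)) ∧
        Filter.Tendsto (fun z => Real.exp (-lm * z) * I' z) Filter.atBot (nhds mm) ∧
        (∀ᶠ z in Filter.atTop, I' z < 0) ∧
        (∀ᶠ z in Filter.atBot, 0 < I' z) := by
  set s := Finset.Icc (-(K:ℤ)) (K:ℤ)
  obtain ⟨hS₀, hS₁⟩ := hχS
  obtain ⟨hN₀, hN₁⟩ := hχN
  have hTp : ∀ u, 0 < Tp u := fun u => by rw [hTpdef]; split_ifs <;> linarith
  have hTm : ∀ u, 0 < Tm u := fun u => by rw [hTmdef]; split_ifs <;> linarith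
  have hT_pos : ∀ z > 0, T z = Tp := fun z hz => funext fun u => by rw [hTdef, if_pos hz]
  have hT_neg : ∀ z < 0, T z = Tm := fun z hz => funext fun u => by rw [hTdef, if_neg hz.not_gt]
  have hvc : ∀ k ∈ s, v k - c ≠ 0 := fun k hk => sub_ne_zero.2 (hcv k hk).symm
  have hvinj : InjOn (fun k => v k - c) s := fun j hj k hk h =>
    StrictMonoOn.injOn hvmono hj hk (sub_left_injective h)
  set I' := fun z => ∑ k ∈ s, ω k * T z (v k - c) *
    (((∑ j ∈ s, ω j * T z (v j - c) * f z j) - T z (v k - c) * f z k) / (v k - c))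
  have hT : ∀ z ≠ 0, ∀ᶠ z' in 𝓝 z, T z' = T z := fun z hz => by
    rcases hz.lt_or_gt with h | h
    · filter_upwards [Iio_mem_nhds h] with z' hz' using (hT_neg z' hz').trans (hT_neg z h).symm
    · filter_upwards [Ioi_mem_nhds h] with z' hz' using (hT_pos z' hz').trans (hT_pos z h).symm
  have hderiv : ∀ z ≠ 0,
      HasDerivAt (fun z' => ∑ k ∈ s, ω k * T z' (v k - c) * f z' k) (I' z) z := fun z hz =>
    (HasDerivAt.fun_sum fun k hk => (hfeq z hz k hk).const_mul (ω k * T z (v k - c)))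
      |>.congr_of_eventuallyEq <| by filter_upwards [hT z hz] with z' h; rw [h]
  obtain ⟨lp, mp, hlp, hmp, htop⟩ := exists_tendsto_exp_mul_sum_tumble_atTop s
    (t := fun k => Tp (v k - c)) (w := fun k => v k - c) hwpos hwsum (fun k _ => hTp _) hvc
    ((injOn_div_self_of_eq_ite (by linarith) (by linarith) hTpdef).comp hvinj hvc) hadmR.ne
    (fun z hz k hk => by simpa only [hT_pos z hz] using hfeq z hz.ne' k hk)
    (fun z _ k hk => hfpos z k hk) hftop
  obtain ⟨lm, mm, hlm, hmm, hbot⟩ := exists_tendsto_exp_mul_sum_tumble_atBot s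
    (t := fun k => Tm (v k - c)) (w := fun k => v k - c) hwpos hwsum (fun k _ => hTm _) hvc
    ((injOn_div_self_of_eq_ite (by linarith) (by linarith) hTmdef).comp hvinj hvc) hadmL.ne'
    (fun z hz k hk => by simpa only [hT_neg z hz] using hfeq z hz.ne k hk)
    (fun z _ k hk => hfpos z k hk) hfbot
  replace htop : Tendsto (fun z => exp (lp * z) * I' z) atTop (𝓝 (-mp)) := htop.congr' <| by
    filter_upwards [eventually_gt_atTop 0] with z hz
    simp only [I', hT_pos z hz]
  replace hbot : Tendsto (fun z => exp (-lm * z) * I' z) atBot (𝓝 mm) := hbot.congr' <| by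
    filter_upwards [eventually_lt_atBot 0] with z hz
    simp only [I', hT_neg z hz]
  refine ⟨I', hderiv, lp, mp, lm, mm, hlp, hmp, hlm, hmm, htop, hbot, ?_, ?_⟩
  · exact (htop.eventually (gt_mem_nhds (neg_lt_zero.2 hmp))).mono fun z hz =>
      neg_of_mul_neg_right hz (exp_pos _).le
  · exact (hbot.eventually (lt_mem_nhds hmm)).mono fun z hz =>
      pos_of_mul_pos_right hz (exp_pos _).le

theorem stmt1
    (K : ℕ) (hK : 1 ≤ K)
    (v ω : ℤ → ℝ)
    (hv0 : v 0 = 0)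
    (hvsym : ∀ k ∈ Finset.Icc (-(K:ℤ)) (K:ℤ), v (-k) = - v k)
    (hvmono : ∀ j ∈ Finset.Icc (-(K:ℤ)) (K:ℤ), ∀ k ∈ Finset.Icc (-(K:ℤ)) (K:ℤ), j < k → v j < v k)
    (hwpos : ∀ k ∈ Finset.Icc (-(K:ℤ)) (K:ℤ), 0 < ω k)
    (hwsym : ∀ k ∈ Finset.Icc (-(K:ℤ)) (K:ℤ), ω (-k) = ω k)
    (hwsum : ∑ k ∈ Finset.Icc (-(K:ℤ)) (K:ℤ), ω k = 1)
    (χS χN : ℝ) (hχS : χS ∈ Set.Ioo 0 (1/2 : ℝ)) (hχN : χN ∈ Set.Ioo 0 (1/2 : ℝ))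
    (c : ℝ) (hc0 : 0 < c) (hcK : c < v (K:ℤ))
    (hcv : ∀ k ∈ Finset.Icc (-(K:ℤ)) (K:ℤ), c ≠ v k)
    (Tp Tm : ℝ → ℝ) (T : ℝ → ℝ → ℝ)
    (hTpdef : ∀ u : ℝ, Tp u = if 0 < u then 1 + χS - χN else 1 - χS + χN)
    (hTmdef : ∀ u : ℝ, Tm u = if 0 < u then 1 - χS - χN else 1 + χS + χN)
    (hTdef : ∀ z u : ℝ, T z u = if 0 < z then Tp u else Tm u)
    (hadmL : 0 < ∑ k ∈ Finset.Icc (-(K:ℤ)) (K:ℤ), ω k * (v k - c) / Tm (v k - c))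
    (hadmR : ∑ k ∈ Finset.Icc (-(K:ℤ)) (K:ℤ), ω k * (v k - c) / Tp (v k - c) < 0)
    (f : ℝ → ℤ → ℝ)
    (hfc : ∀ k ∈ Finset.Icc (-(K:ℤ)) (K:ℤ), Continuous fun z => f z k)
    (hfeq : ∀ z : ℝ, z ≠ 0 → ∀ k ∈ Finset.Icc (-(K:ℤ)) (K:ℤ),
      HasDerivAt (fun z' => f z' k)
        (((∑ k' ∈ Finset.Icc (-(K:ℤ)) (K:ℤ), ω k' * T z (v k' - c) * f z k') -
          T z (v k - c) * f z k) / (v k - c)) z)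
    (hfpos : ∀ z : ℝ, ∀ k ∈ Finset.Icc (-(K:ℤ)) (K:ℤ), 0 < f z k)
    (hfint : MeasureTheory.Integrable fun z => ∑ k ∈ Finset.Icc (-(K:ℤ)) (K:ℤ), ω k * f z k)
    (hfnorm : (∫ z : ℝ, ∑ k ∈ Finset.Icc (-(K:ℤ)) (K:ℤ), ω k * f z k) = 1)
    (hftop : ∀ k ∈ Finset.Icc (-(K:ℤ)) (K:ℤ), Filter.Tendsto (fun z => f z k) Filter.atTop (nhds 0))
    (hfbot : ∀ k ∈ Finset.Icc (-(K:ℤ)) (K:ℤ), Filter.Tendsto (fun z => f z k) Filter.atBot (nhds 0)) :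
    ∃ I' : ℝ → ℝ,
      (∀ z : ℝ, z ≠ 0 →
        HasDerivAt (fun z' => ∑ k ∈ Finset.Icc (-(K:ℤ)) (K:ℤ), ω k * T z' (v k - c) * f z' k) (I' z) z) ∧
      ∃ lp mp lm mm : ℝ, 0 < lp ∧ 0 < mp ∧ 0 < lm ∧ 0 < mm ∧
        Filter.Tendsto (fun z => Real.exp (lp * z) * I' z) Filter.atTop (nhds (-mp)) ∧
        Filter.Tendsto (fun z => Real.exp (-lm * z) * I' z) Filter.atBot (nhds mm) ∧
        (∀ᶠ z in Filter.atTop, I' z < 0) ∧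
        (∀ᶠ z in Filter.atBot, 0 < I' z) :=
  stmt1_general K v ω hvmono hwpos hwsum χS χN hχS hχN c hcv Tp Tm T hTpdef hTmdef hTdef hadmL hadmR
    f hfeq hfpos hftop hfbot
end

section
/- Assume the mean algebraic run length on the right is negative: Σ_k ω_k (v_k − c)/T₊(v_k − c) < 0. Then there exists a unique λ in the open interval (0, T₊⁺/(v_K − c)) satisfying the right dispersion relation. -/
/-!
Write `u k = v k - c` and `T k = T₊(u k)`. Away from `λ = 0` the dispersion relation is equivalent to
the vanishing of `ψ(λ) = Σ ω_k u_k / (T_k - λ u_k)`, because `Σ ω_k T_k / (T_k - λ u_k) = 1 + λ ψ(λ)`.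
On `[0, T₊⁺ / u_K)` all denominators are positive, every term of `ψ` is nondecreasing and the term of
index `K` is strictly increasing and blows up at the right end. Since `ψ(0)` is the (negative) mean
run length, `ψ` has exactly one zero there.
-/

open Filter Topology

namespace Dispersion

variable {ι : Type*} (s : Finset ι) (w u T : ι → ℝ)

noncomputable def meanRunLength (lam : ℝ) : ℝ :=
  ∑ i ∈ s, w i * u i / (T i - lam * u i)

@[simp]
lemma meanRunLength_zero : meanRunLength s w u T 0 = ∑ i ∈ s, w i * u i / T i := by
  simp [meanRunLength]

def admissible : Set ℝ :=
  {lam | ∀ i ∈ s, 0 < T i - lam * u i}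

variable {s w u T}

lemma sum_mul_div_sub_mul_eq {lam : ℝ} (hlam : ∀ i ∈ s, T i - lam * u i ≠ 0) :
    ∑ i ∈ s, w i * T i / (T i - lam * u i) = ∑ i ∈ s, w i + lam * meanRunLength s w u T lam := by
  rw [meanRunLength, Finset.mul_sum, ← Finset.sum_add_distrib]
  refine Finset.sum_congr rfl fun i hi => ?_
  field_simp [hlam i hi]
  ring

lemma div_sub_mul_le_div_sub_mul {w u T a b : ℝ} (hw : 0 ≤ w) (ha : 0 < T - a * u)
    (hb : 0 < T - b * u) (hab : a ≤ b) : w * u / (T - a * u) ≤ w * u / (T - b * u) := by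
  rw [div_le_div_iff₀ ha hb]
  nlinarith [mul_nonneg (mul_nonneg hw (mul_self_nonneg u)) (sub_nonneg.2 hab)]

lemma div_sub_mul_lt_div_sub_mul {w u T a b : ℝ} (hw : 0 < w) (hu : u ≠ 0) (ha : 0 < T - a * u)
    (hb : 0 < T - b * u) (hab : a < b) : w * u / (T - a * u) < w * u / (T - b * u) := by
  rw [div_lt_div_iff₀ ha hb]
  nlinarith [mul_pos (mul_pos hw (mul_self_pos.2 hu)) (sub_pos.2 hab)]

lemma meanRunLength_monotoneOn (hw : ∀ i ∈ s, 0 ≤ w i) :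
    MonotoneOn (meanRunLength s w u T) (admissible s u T) := fun _ ha _ hb hab =>
  Finset.sum_le_sum fun i hi => div_sub_mul_le_div_sub_mul (hw i hi) (ha i hi) (hb i hi) hab

lemma meanRunLength_strictMonoOn (hw : ∀ i ∈ s, 0 ≤ w i) {j : ι} (hj : j ∈ s) (hwj : 0 < w j)
    (huj : u j ≠ 0) : StrictMonoOn (meanRunLength s w u T) (admissible s u T) := fun _ ha _ hb hab =>
  Finset.sum_lt_sum
    (fun i hi => div_sub_mul_le_div_sub_mul (hw i hi) (ha i hi) (hb i hi) hab.le)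
    ⟨j, hj, div_sub_mul_lt_div_sub_mul hwj huj (ha j hj) (hb j hj) hab⟩

lemma meanRunLength_continuousOn :
    ContinuousOn (meanRunLength s w u T) (admissible s u T) := by
  refine continuousOn_finsetSum s fun i hi => ?_
  exact continuousOn_const.div (by fun_prop) fun lam hlam => (hlam i hi).ne'

lemma Ico_subset_admissible {Λ : ℝ} (hT : ∀ i ∈ s, 0 < T i) (hΛ : ∀ i ∈ s, Λ * u i ≤ T i) :
    Set.Ico 0 Λ ⊆ admissible s u T := by
  intro lam ⟨hlam0, hlamΛ⟩ i hi
  rcases le_or_gt (u i) 0 with hu | hu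
  · nlinarith [hT i hi]
  · nlinarith [hΛ i hi]

lemma tendsto_div_sub_mul_atTop {w u T Λ : ℝ} (hwu : 0 < w * u) (hu : 0 < u) (hΛ : Λ * u = T) :
    Tendsto (fun lam => w * u / (T - lam * u)) (𝓝[<] Λ) atTop := by
  have hden : Tendsto (fun lam => T - lam * u) (𝓝[<] Λ) (𝓝[>] 0) := by
    refine tendsto_nhdsWithin_of_tendsto_nhds_of_eventually_within _ ?_ ?_
    · have hcont : Tendsto (fun lam => T - lam * u) (𝓝 Λ) (𝓝 (T - Λ * u)) :=
        ((continuous_const.sub (continuous_id.mul continuous_const)).tendsto Λ)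
      rw [hΛ, sub_self] at hcont
      exact hcont.mono_left nhdsWithin_le_nhds
    · filter_upwards [self_mem_nhdsWithin] with lam (hlam : lam < Λ)
      show 0 < T - lam * u
      nlinarith
  simpa only [div_eq_mul_inv, Function.comp_def] using
    (tendsto_inv_nhdsGT_zero.comp hden).const_mul_atTop hwu

variable [DecidableEq ι]

/-- The term of index `j` blows up while the others, being nondecreasing, stay above their
value at `λ = 0`. -/
lemma tendsto_meanRunLength_atTop {Λ : ℝ} (hT : ∀ i ∈ s, 0 < T i) (hΛ : ∀ i ∈ s, Λ * u i ≤ T i)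
    (hw : ∀ i ∈ s, 0 ≤ w i) {j : ι} (hj : j ∈ s) (hwj : 0 < w j) (huj : 0 < u j)
    (hΛj : Λ * u j = T j) : Tendsto (meanRunLength s w u T) (𝓝[<] Λ) atTop := by
  have hsplit : meanRunLength s w u T = fun lam =>
      meanRunLength (s.erase j) w u T lam + w j * u j / (T j - lam * u j) := by
    ext lam
    exact (Finset.sum_erase_add s _ hj).symm
  have hrest : ∀ᶠ lam in 𝓝[<] Λ,
      meanRunLength (s.erase j) w u T 0 ≤ meanRunLength (s.erase j) w u T lam := by
    have hsub : Set.Ico 0 Λ ⊆ admissible (s.erase j) u T := fun lam hlam i hi =>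
      Ico_subset_admissible hT hΛ hlam i (Finset.mem_of_mem_erase hi)
    have hΛ0 : 0 < Λ := pos_of_mul_pos_left (hΛj ▸ hT j hj) huj.le
    filter_upwards [Ico_mem_nhdsLT hΛ0] with lam hlam
    exact meanRunLength_monotoneOn (fun i hi => hw i (Finset.mem_of_mem_erase hi))
      (hsub ⟨le_rfl, hΛ0⟩) (hsub hlam) hlam.1
  rw [hsplit]
  exact tendsto_atTop_add_left_of_le' _ _ hrest
    (tendsto_div_sub_mul_atTop (mul_pos hwj huj) huj hΛj)

theorem existsUnique_dispersion_root {Λ : ℝ} (hT : ∀ i ∈ s, 0 < T i)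
    (hΛ : ∀ i ∈ s, Λ * u i ≤ T i) (hw : ∀ i ∈ s, 0 ≤ w i) (hwsum : ∑ i ∈ s, w i = 1) {j : ι}
    (hj : j ∈ s) (hwj : 0 < w j) (huj : 0 < u j) (hΛj : Λ * u j = T j)
    (hneg : meanRunLength s w u T 0 < 0) :
    ∃! lam : ℝ, lam ∈ Set.Ioo 0 Λ ∧ (∀ i ∈ s, T i - lam * u i ≠ 0) ∧
      ∑ i ∈ s, w i * T i / (T i - lam * u i) = 1 := by
  have hΛ0 : 0 < Λ := pos_of_mul_pos_left (hΛj ▸ hT j hj) huj.le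
  have hsub : Set.Ioo 0 Λ ⊆ admissible s u T :=
    Set.Ioo_subset_Ico_self.trans (Ico_subset_admissible hT hΛ)
  have hroot : ∀ lam ∈ Set.Ioo 0 Λ,
      ∑ i ∈ s, w i * T i / (T i - lam * u i) = 1 ↔ meanRunLength s w u T lam = 0 := by
    intro lam hlam
    rw [sum_mul_div_sub_mul_eq fun i hi => (hsub hlam i hi).ne', hwsum, add_eq_left,
      mul_eq_zero, or_iff_right hlam.1.ne']
  obtain ⟨lam₀, hpos, hlam₀⟩ : ∃ lam₀, 0 < meanRunLength s w u T lam₀ ∧ lam₀ ∈ Set.Ioo 0 Λ :=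
    (((tendsto_meanRunLength_atTop hT hΛ hw hj hwj huj hΛj).eventually_gt_atTop 0).and
      (Ioo_mem_nhdsLT hΛ0)).exists
  have hcont : ContinuousOn (meanRunLength s w u T) (Set.Icc 0 lam₀) :=
    meanRunLength_continuousOn.mono
      ((Set.Icc_subset_Ico_right hlam₀.2).trans (Ico_subset_admissible hT hΛ))
  obtain ⟨lam, hlam, hzero⟩ := intermediate_value_Ioo hlam₀.1.le hcont ⟨hneg, hpos⟩
  have hlamΛ : lam ∈ Set.Ioo 0 Λ := ⟨hlam.1, hlam.2.trans hlam₀.2⟩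
  refine ⟨lam, ⟨hlamΛ, fun i hi => (hsub hlamΛ i hi).ne', (hroot lam hlamΛ).2 hzero⟩, ?_⟩
  rintro μ ⟨hμ, -, hsum⟩
  exact (meanRunLength_strictMonoOn hw hj hwj huj.ne').injOn (hsub hμ) (hsub hlamΛ)
    (((hroot μ hμ).1 hsum).trans hzero.symm)

end Dispersion

theorem stmt4_general
    (K : ℕ)
    (v ω : ℤ → ℝ)
    (hvmono : ∀ j ∈ Finset.Icc (-(K:ℤ)) (K:ℤ), ∀ k ∈ Finset.Icc (-(K:ℤ)) (K:ℤ), j < k → v j < v k)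
    (hwpos : ∀ k ∈ Finset.Icc (-(K:ℤ)) (K:ℤ), 0 < ω k)
    (hwsum : ∑ k ∈ Finset.Icc (-(K:ℤ)) (K:ℤ), ω k = 1)
    (χS χN : ℝ) (hχS : χS ∈ Set.Ioo 0 (1/2 : ℝ)) (hχN : χN ∈ Set.Ioo 0 (1/2 : ℝ))
    (c : ℝ) (hcK : c < v (K:ℤ))
    (Tp : ℝ → ℝ)
    (hTpdef : ∀ u : ℝ, Tp u = if 0 < u then 1 + χS - χN else 1 - χS + χN)
    (hadmR : ∑ k ∈ Finset.Icc (-(K:ℤ)) (K:ℤ), ω k * (v k - c) / Tp (v k - c) < 0) :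
    ∃! lam : ℝ, lam ∈ Set.Ioo 0 ((1 + χS - χN) / (v (K:ℤ) - c)) ∧
      (∀ k ∈ Finset.Icc (-(K:ℤ)) (K:ℤ), Tp (v k - c) - lam * (v k - c) ≠ 0) ∧
      (∑ k ∈ Finset.Icc (-(K:ℤ)) (K:ℤ), ω k * Tp (v k - c) / (Tp (v k - c) - lam * (v k - c))) = 1 := by
  obtain ⟨hχS0, hχS1⟩ := hχS
  obtain ⟨hχN0, hχN1⟩ := hχN
  have hKmem : (K:ℤ) ∈ Finset.Icc (-(K:ℤ)) K := Finset.mem_Icc.2 ⟨by omega, le_rfl⟩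
  have huK : 0 < v K - c := sub_pos.2 hcK
  have hTp_pos : ∀ u, 0 < Tp u := fun u => by rw [hTpdef]; split_ifs <;> linarith
  have hTp_of_pos : ∀ u, 0 < u → Tp u = 1 + χS - χN := fun u hu => by rw [hTpdef, if_pos hu]
  have hΛK : (1 + χS - χN) / (v K - c) * (v K - c) = Tp (v K - c) := by
    rw [div_mul_cancel₀ _ huK.ne', hTp_of_pos _ huK]
  refine Dispersion.existsUnique_dispersion_root (fun k _ => hTp_pos _) (fun k hk => ?_)
    (fun k hk => (hwpos k hk).le) hwsum hKmem (hwpos K hKmem) huK hΛK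
    (by rwa [Dispersion.meanRunLength_zero])
  have hΛ0 : 0 ≤ (1 + χS - χN) / (v K - c) := (div_pos (by linarith) huK).le
  rcases le_or_gt (v k - c) 0 with hu | hu
  · exact (mul_nonpos_of_nonneg_of_nonpos hΛ0 hu).trans (hTp_pos _).le
  · have hvk : v k ≤ v K := by
      rcases (Finset.mem_Icc.1 hk).2.lt_or_eq with hlt | heq
      · exact (hvmono k hk K hKmem hlt).le
      · rw [heq]
    calc (1 + χS - χN) / (v K - c) * (v k - c)
        ≤ (1 + χS - χN) / (v K - c) * (v K - c) := by gcongr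
      _ = Tp (v k - c) := by rw [hΛK, hTp_of_pos _ hu, hTp_of_pos _ huK]

theorem stmt4
    (K : ℕ) (hK : 1 ≤ K)
    (v ω : ℤ → ℝ)
    (hv0 : v 0 = 0)
    (hvsym : ∀ k ∈ Finset.Icc (-(K:ℤ)) (K:ℤ), v (-k) = - v k)
    (hvmono : ∀ j ∈ Finset.Icc (-(K:ℤ)) (K:ℤ), ∀ k ∈ Finset.Icc (-(K:ℤ)) (K:ℤ), j < k → v j < v k)
    (hwpos : ∀ k ∈ Finset.Icc (-(K:ℤ)) (K:ℤ), 0 < ω k)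
    (hwsym : ∀ k ∈ Finset.Icc (-(K:ℤ)) (K:ℤ), ω (-k) = ω k)
    (hwsum : ∑ k ∈ Finset.Icc (-(K:ℤ)) (K:ℤ), ω k = 1)
    (χS χN : ℝ) (hχS : χS ∈ Set.Ioo 0 (1/2 : ℝ)) (hχN : χN ∈ Set.Ioo 0 (1/2 : ℝ))
    (c : ℝ) (hc0 : 0 < c) (hcK : c < v (K:ℤ))
    (hcv : ∀ k ∈ Finset.Icc (-(K:ℤ)) (K:ℤ), c ≠ v k)
    (Tp : ℝ → ℝ)
    (hTpdef : ∀ u : ℝ, Tp u = if 0 < u then 1 + χS - χN else 1 - χS + χN)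
    (hadmR : ∑ k ∈ Finset.Icc (-(K:ℤ)) (K:ℤ), ω k * (v k - c) / Tp (v k - c) < 0) :
    ∃! lam : ℝ, lam ∈ Set.Ioo 0 ((1 + χS - χN) / (v (K:ℤ) - c)) ∧
      (∀ k ∈ Finset.Icc (-(K:ℤ)) (K:ℤ), Tp (v k - c) - lam * (v k - c) ≠ 0) ∧
      (∑ k ∈ Finset.Icc (-(K:ℤ)) (K:ℤ), ω k * Tp (v k - c) / (Tp (v k - c) - lam * (v k - c))) = 1 :=
  stmt4_general K v ω hvmono hwpos hwsum χS χN hχS hχN c hcK Tp hTpdef hadmR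
end

section
/- Assume the mean algebraic run length on the left is positive: Σ_k ω_k (v_k − c)/T₋(v_k − c) > 0. Then there exists a unique λ in the open interval (T₋⁻/(v_{−K} − c), 0) satisfying the left dispersion relation. -/
/-!
Write `u_k = v_k - c`, `T_k = T₋(u_k)` and `ψ(λ) = Σ_k ω_k u_k / (T_k - λ u_k)`. Since `Σ_k ω_k = 1`,
`Σ_k ω_k T_k / (T_k - λ u_k) = 1 + λ ψ(λ)`, so for `λ ≠ 0` the dispersion relation says `ψ(λ) = 0`.
With `a = T₋⁻ / u_{-K}` every denominator `T_k - λ u_k` is positive for `λ ∈ (a, 0]`; there each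
term of `ψ` is nondecreasing in `λ`, strictly so for `k = -K`, which gives uniqueness. The term
`k = -K` equals `ω_{-K} / (a - λ)` and tends to `-∞` as `λ → a⁺`, while the others stay bounded
above, so `ψ` changes sign on `(a, 0)` because `ψ(0)` is the positive mean run length.
-/

open Filter Topology Set

theorem sub_mul_pos_of_mem_Ioc {a l T u : ℝ} (hT : 0 < T) (ha : a * u ≤ T) (hl : l ∈ Ioc a 0) :
    0 < T - l * u := by
  obtain ⟨hal, hl0⟩ := hl
  rcases le_or_gt 0 u with hu | hu <;> nlinarith

theorem mul_div_sub_mul_le {w u T l₁ l₂ : ℝ} (hw : 0 ≤ w) (h₁ : 0 < T - l₁ * u)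
    (h₂ : 0 < T - l₂ * u) (hl : l₁ ≤ l₂) : w * u / (T - l₁ * u) ≤ w * u / (T - l₂ * u) := by
  rw [div_le_div_iff₀ h₁ h₂]
  nlinarith [mul_nonneg (mul_nonneg hw (mul_self_nonneg u)) (sub_nonneg.2 hl)]

theorem mul_div_sub_mul_lt {w u T l₁ l₂ : ℝ} (hw : 0 < w) (hu : u ≠ 0) (h₁ : 0 < T - l₁ * u)
    (h₂ : 0 < T - l₂ * u) (hl : l₁ < l₂) : w * u / (T - l₁ * u) < w * u / (T - l₂ * u) := by
  rw [div_lt_div_iff₀ h₁ h₂]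
  nlinarith [mul_pos (mul_pos hw (mul_self_pos.2 hu)) (sub_pos.2 hl)]

theorem mul_div_sub_mul_le_abs {w u T l : ℝ} (hw : 0 ≤ w) (hT : 0 < T) (hl : l ≤ 0)
    (h : 0 < T - l * u) : w * u / (T - l * u) ≤ |w * u / T| := by
  rcases le_or_gt u 0 with hu | hu
  · exact (div_nonpos_of_nonpos_of_nonneg (mul_nonpos_of_nonneg_of_nonpos hw hu) h.le).trans
      (abs_nonneg _)
  · refine le_trans ?_ (le_abs_self _)
    exact div_le_div_of_nonneg_left (mul_nonneg hw hu.le) hT (by nlinarith)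

theorem tendsto_div_sub_nhdsGT {a w : ℝ} (hw : 0 < w) :
    Tendsto (fun l : ℝ => w / (a - l)) (𝓝[>] a) atBot := by
  have h : Tendsto (fun l : ℝ => a - l) (𝓝[>] a) (𝓝[<] 0) := by
    have := (map_subLeft_nhdsGT (c := a) (a := a)).le
    rwa [sub_self] at this
  simpa [div_eq_mul_inv] using (tendsto_inv_nhdsLT_zero.comp h).const_mul_atBot hw

section MeanRunLength

variable {ι : Type*} (s : Finset ι) (w u T : ι → ℝ)

noncomputable def meanRunLength (l : ℝ) : ℝ :=
  ∑ k ∈ s, w k * u k / (T k - l * u k)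

theorem meanRunLength_zero : meanRunLength s w u T 0 = ∑ k ∈ s, w k * u k / T k := by
  simp only [meanRunLength, zero_mul, sub_zero]

theorem sum_mul_div_sub_mul_eq {l : ℝ} (h : ∀ k ∈ s, T k - l * u k ≠ 0) :
    ∑ k ∈ s, w k * T k / (T k - l * u k) = ∑ k ∈ s, w k + l * meanRunLength s w u T l := by
  rw [meanRunLength, Finset.mul_sum, ← Finset.sum_add_distrib]
  refine Finset.sum_congr rfl fun k hk => ?_
  field_simp [h k hk]
  ring

theorem sum_mul_div_sub_mul_eq_one_iff {l : ℝ} (hw : ∑ k ∈ s, w k = 1) (hl : l ≠ 0)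
    (h : ∀ k ∈ s, T k - l * u k ≠ 0) :
    ∑ k ∈ s, w k * T k / (T k - l * u k) = 1 ↔ meanRunLength s w u T l = 0 := by
  rw [sum_mul_div_sub_mul_eq s w u T h, hw, add_eq_left, mul_eq_zero, or_iff_right hl]

variable {s w u T} {a : ℝ}

theorem continuousOn_meanRunLength (hT : ∀ k ∈ s, 0 < T k) (ha : ∀ k ∈ s, a * u k ≤ T k) :
    ContinuousOn (meanRunLength s w u T) (Ioc a 0) := by
  unfold meanRunLength
  refine continuousOn_finsetSum s fun k hk => continuousOn_const.div (by fun_prop) fun l hl => ?_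
  exact (sub_mul_pos_of_mem_Ioc (hT k hk) (ha k hk) hl).ne'

theorem strictMonoOn_meanRunLength (hw : ∀ k ∈ s, 0 ≤ w k) (hT : ∀ k ∈ s, 0 < T k)
    (ha : ∀ k ∈ s, a * u k ≤ T k) {j : ι} (hj : j ∈ s) (hwj : 0 < w j) (haj : a * u j = T j) :
    StrictMonoOn (meanRunLength s w u T) (Ioc a 0) := by
  intro l₁ hl₁ l₂ hl₂ hl
  have hpos : ∀ k ∈ s, ∀ l ∈ Ioc a 0, 0 < T k - l * u k :=
    fun k hk l hl => sub_mul_pos_of_mem_Ioc (hT k hk) (ha k hk) hl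
  have huj : u j ≠ 0 := fun h => (hT j hj).ne' (by rw [← haj, h, mul_zero])
  refine Finset.sum_lt_sum (fun k hk => ?_) ⟨j, hj, ?_⟩
  · exact mul_div_sub_mul_le (hw k hk) (hpos k hk l₁ hl₁) (hpos k hk l₂ hl₂) hl.le
  · exact mul_div_sub_mul_lt hwj huj (hpos j hj l₁ hl₁) (hpos j hj l₂ hl₂) hl

theorem tendsto_meanRunLength_nhdsGT [DecidableEq ι] (hw : ∀ k ∈ s, 0 ≤ w k)
    (hT : ∀ k ∈ s, 0 < T k) (ha : ∀ k ∈ s, a * u k ≤ T k) {j : ι} (hj : j ∈ s) (hwj : 0 < w j)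
    (haj : a * u j = T j) (ha0 : a < 0) :
    Tendsto (meanRunLength s w u T) (𝓝[>] a) atBot := by
  have huj : u j ≠ 0 := fun h => (hT j hj).ne' (by rw [← haj, h, mul_zero])
  have hsplit : meanRunLength s w u T =
      fun l => w j / (a - l) + ∑ k ∈ s.erase j, w k * u k / (T k - l * u k) := by
    ext l
    rw [meanRunLength, ← Finset.add_sum_erase s _ hj, ← haj, ← sub_mul,
      mul_div_mul_right _ _ huj]
  rw [hsplit]
  refine tendsto_atBot_add_right_of_ge' _ (∑ k ∈ s.erase j, |w k * u k / T k|)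
    (tendsto_div_sub_nhdsGT hwj) ?_
  filter_upwards [Ioc_mem_nhdsGT ha0] with l hl
  refine Finset.sum_le_sum fun k hk => ?_
  have hk := Finset.mem_of_mem_erase hk
  exact mul_div_sub_mul_le_abs (hw k hk) (hT k hk) hl.2
    (sub_mul_pos_of_mem_Ioc (hT k hk) (ha k hk) hl)

theorem existsUnique_meanRunLength_eq_zero (hw : ∀ k ∈ s, 0 ≤ w k) (hT : ∀ k ∈ s, 0 < T k)
    (ha : ∀ k ∈ s, a * u k ≤ T k) {j : ι} (hj : j ∈ s) (hwj : 0 < w j) (haj : a * u j = T j)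
    (ha0 : a < 0) (h0 : 0 < meanRunLength s w u T 0) :
    ∃! l, l ∈ Ioo a 0 ∧ meanRunLength s w u T l = 0 := by
  classical
  obtain ⟨l₁, hneg, hl₁⟩ := ((tendsto_meanRunLength_nhdsGT hw hT ha hj hwj haj ha0).eventually
    (eventually_lt_atBot 0) |>.and (Ioo_mem_nhdsGT ha0)).exists
  have hcont : ContinuousOn (meanRunLength s w u T) (Icc l₁ 0) :=
    (continuousOn_meanRunLength hT ha).mono (Icc_subset_Ioc_iff hl₁.2.le |>.2 ⟨hl₁.1, le_rfl⟩)
  obtain ⟨l, hl, hroot⟩ := intermediate_value_Ioo hl₁.2.le hcont ⟨hneg, h0⟩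
  refine ⟨l, ⟨⟨hl₁.1.trans hl.1, hl.2⟩, hroot⟩, fun l' ⟨hl', hroot'⟩ => ?_⟩
  exact (strictMonoOn_meanRunLength hw hT ha hj hwj haj).injOn (Ioo_subset_Ioc_self hl')
    ⟨hl₁.1.trans hl.1, hl.2.le⟩ (hroot'.trans hroot.symm)

theorem existsUnique_dispersion_root (hw : ∀ k ∈ s, 0 ≤ w k) (hw1 : ∑ k ∈ s, w k = 1)
    (hT : ∀ k ∈ s, 0 < T k) (ha : ∀ k ∈ s, a * u k ≤ T k) {j : ι} (hj : j ∈ s) (hwj : 0 < w j)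
    (haj : a * u j = T j) (ha0 : a < 0) (h0 : 0 < meanRunLength s w u T 0) :
    ∃! l, l ∈ Ioo a 0 ∧ (∀ k ∈ s, T k - l * u k ≠ 0) ∧
      ∑ k ∈ s, w k * T k / (T k - l * u k) = 1 := by
  refine (existsUnique_congr fun l => and_congr_right fun hl => ?_).1
    (existsUnique_meanRunLength_eq_zero hw hT ha hj hwj haj ha0 h0)
  have hD : ∀ k ∈ s, T k - l * u k ≠ 0 :=
    fun k hk => (sub_mul_pos_of_mem_Ioc (hT k hk) (ha k hk) (Ioo_subset_Ioc_self hl)).ne'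
  rw [and_iff_right hD, sum_mul_div_sub_mul_eq_one_iff s w u T hw1 hl.2.ne hD]

end MeanRunLength

theorem stmt5_general
    (K : ℕ)
    (v ω : ℤ → ℝ)
    (hv0 : v 0 = 0)
    (hvmono : ∀ j ∈ Finset.Icc (-(K:ℤ)) (K:ℤ), ∀ k ∈ Finset.Icc (-(K:ℤ)) (K:ℤ), j < k → v j < v k)
    (hwpos : ∀ k ∈ Finset.Icc (-(K:ℤ)) (K:ℤ), 0 < ω k)
    (hwsum : ∑ k ∈ Finset.Icc (-(K:ℤ)) (K:ℤ), ω k = 1)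
    (χS χN : ℝ) (hχS : χS ∈ Set.Ioo 0 (1/2 : ℝ)) (hχN : χN ∈ Set.Ioo 0 (1/2 : ℝ))
    (c : ℝ) (hc0 : 0 < c)
    (Tm : ℝ → ℝ)
    (hTmdef : ∀ u : ℝ, Tm u = if 0 < u then 1 - χS - χN else 1 + χS + χN)
    (hadmL : 0 < ∑ k ∈ Finset.Icc (-(K:ℤ)) (K:ℤ), ω k * (v k - c) / Tm (v k - c)) :
    ∃! lam : ℝ, lam ∈ Set.Ioo ((1 + χS + χN) / (v (-(K:ℤ)) - c)) 0 ∧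
      (∀ k ∈ Finset.Icc (-(K:ℤ)) (K:ℤ), Tm (v k - c) - lam * (v k - c) ≠ 0) ∧
      (∑ k ∈ Finset.Icc (-(K:ℤ)) (K:ℤ), ω k * Tm (v k - c) / (Tm (v k - c) - lam * (v k - c))) = 1 := by
  obtain ⟨hχS₀, hχS₁⟩ := hχS
  obtain ⟨hχN₀, hχN₁⟩ := hχN
  have hKmem : -(K:ℤ) ∈ Finset.Icc (-(K:ℤ)) K := by simp
  have hvmin : ∀ k ∈ Finset.Icc (-(K:ℤ)) K, v (-K) ≤ v k := fun k hk =>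
    (eq_or_lt_of_le (Finset.mem_Icc.1 hk).1).elim (fun h => h ▸ le_rfl)
      fun h => (hvmono _ hKmem k hk h).le
  have humin : v (-K) - c < 0 := by linarith [hvmin 0 (by simp)]
  have hTpos : ∀ x, 0 < Tm x := fun x => by
    rw [hTmdef]; split_ifs <;> linarith
  set a := (1 + χS + χN) / (v (-(K:ℤ)) - c)
  have ha0 : a < 0 := div_neg_of_pos_of_neg (by linarith) humin
  have haK : a * (v (-K) - c) = 1 + χS + χN := div_mul_cancel₀ _ humin.ne
  have hTK : Tm (v (-K) - c) = 1 + χS + χN := by rw [hTmdef, if_neg (not_lt.2 humin.le)]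
  refine existsUnique_dispersion_root (fun k hk => (hwpos k hk).le) hwsum (fun k _ => hTpos _)
    (fun k hk => ?_) hKmem (hwpos _ hKmem) (haK.trans hTK.symm) ha0 (by rwa [meanRunLength_zero])
  rw [hTmdef]
  split_ifs with hu
  · exact (mul_neg_of_neg_of_pos ha0 hu).le.trans (by linarith)
  · calc a * (v k - c) ≤ a * (v (-K) - c) :=
          mul_le_mul_of_nonpos_left (by linarith [hvmin k hk]) ha0.le
      _ = 1 + χS + χN := haK

theorem stmt5
    (K : ℕ) (hK : 1 ≤ K)
    (v ω : ℤ → ℝ)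
    (hv0 : v 0 = 0)
    (hvsym : ∀ k ∈ Finset.Icc (-(K:ℤ)) (K:ℤ), v (-k) = - v k)
    (hvmono : ∀ j ∈ Finset.Icc (-(K:ℤ)) (K:ℤ), ∀ k ∈ Finset.Icc (-(K:ℤ)) (K:ℤ), j < k → v j < v k)
    (hwpos : ∀ k ∈ Finset.Icc (-(K:ℤ)) (K:ℤ), 0 < ω k)
    (hwsym : ∀ k ∈ Finset.Icc (-(K:ℤ)) (K:ℤ), ω (-k) = ω k)
    (hwsum : ∑ k ∈ Finset.Icc (-(K:ℤ)) (K:ℤ), ω k = 1)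
    (χS χN : ℝ) (hχS : χS ∈ Set.Ioo 0 (1/2 : ℝ)) (hχN : χN ∈ Set.Ioo 0 (1/2 : ℝ))
    (c : ℝ) (hc0 : 0 < c) (hcK : c < v (K:ℤ))
    (hcv : ∀ k ∈ Finset.Icc (-(K:ℤ)) (K:ℤ), c ≠ v k)
    (Tm : ℝ → ℝ)
    (hTmdef : ∀ u : ℝ, Tm u = if 0 < u then 1 - χS - χN else 1 + χS + χN)
    (hadmL : 0 < ∑ k ∈ Finset.Icc (-(K:ℤ)) (K:ℤ), ω k * (v k - c) / Tm (v k - c)) :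
    ∃! lam : ℝ, lam ∈ Set.Ioo ((1 + χS + χN) / (v (-(K:ℤ)) - c)) 0 ∧
      (∀ k ∈ Finset.Icc (-(K:ℤ)) (K:ℤ), Tm (v k - c) - lam * (v k - c) ≠ 0) ∧
      (∑ k ∈ Finset.Icc (-(K:ℤ)) (K:ℤ), ω k * Tm (v k - c) / (Tm (v k - c) - lam * (v k - c))) = 1 :=
  stmt5_general K v ω hv0 hvmono hwpos hwsum χS χN hχS hχN c hc0 Tm hTmdef hadmL
end

section
/- Let f be a profile that is positive everywhere, normalized by ∫_ℝ ρ(z) dz = 1, and such that f(z,v_k) → 0 as z → +∞ for every k. Then for every z > 0 and every k with v_k < c, one has f(z,v_k) ≤ (1 + χ_S + χ_N)/(c − v_k). -/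
/-!
On the right half-line every tumbling rate is at most `M = 1 + χ_S + χ_N`, so for `v_k < c` the
kinetic equation gives `∂_z f(·, v_k) ≥ -I / (c - v_k) ≥ -M ρ / (c - v_k)`. Integrating from `z`
to `R` and using `∫ ρ = 1` yields `f(z, v_k) ≤ f(R, v_k) + M / (c - v_k)`; let `R → ∞`.
-/

open MeasureTheory Filter

open Set Topology

theorem sub_le_mul_intervalIntegral_of_neg_mul_le_deriv {f f' g : ℝ → ℝ} {a b C : ℝ}
    (hab : a ≤ b) (hf : ContinuousOn f (Icc a b)) (hderiv : ∀ x ∈ Ioo a b, HasDerivAt f (f' x) x)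
    (hg : IntegrableOn g (Icc a b)) (hbound : ∀ x ∈ Ioo a b, -(C * g x) ≤ f' x) :
    f a - f b ≤ C * ∫ x in a..b, g x := by
  have h := intervalIntegral.sub_le_integral_of_hasDeriv_right_of_le hab hf.neg
    (fun x hx => (hderiv x hx).neg.hasDerivWithinAt) (hg.const_mul C)
    (fun x hx => neg_le.mp (hbound x hx))
  rw [intervalIntegral.integral_const_mul, Pi.neg_apply, Pi.neg_apply] at h
  linarith

theorem le_add_mul_integral_of_neg_mul_le_deriv {f f' g : ℝ → ℝ} {a C L : ℝ} (hC : 0 ≤ C)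
    (hf : ContinuousOn f (Ici a)) (hderiv : ∀ x > a, HasDerivAt f (f' x) x)
    (hg : Integrable g) (hg0 : ∀ x, 0 ≤ g x) (hbound : ∀ x > a, -(C * g x) ≤ f' x)
    (hlim : Tendsto f atTop (𝓝 L)) :
    f a ≤ L + C * ∫ x, g x := by
  have hstep : ∀ b ≥ a, f a ≤ f b + C * ∫ x, g x := by
    intro b hab
    have hsub := sub_le_mul_intervalIntegral_of_neg_mul_le_deriv hab
      (hf.mono Icc_subset_Ici_self) (fun x hx => hderiv x hx.1) hg.integrableOn
      (fun x hx => hbound x hx.1)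
    have hint : ∫ x in a..b, g x ≤ ∫ x, g x := by
      rw [intervalIntegral.integral_of_le hab]
      exact setIntegral_le_integral hg (Eventually.of_forall hg0)
    nlinarith [mul_le_mul_of_nonneg_left hint hC]
  exact ge_of_tendsto (hlim.add_const _) (eventually_atTop.mpr ⟨a, hstep⟩)

theorem neg_div_mul_sum_le_gain_sub_loss_div {ι : Type*} {s : Finset ι} {w t x : ι → ℝ}
    {k : ι} {M u c : ℝ} (hk : k ∈ s) (huc : u < c) (hw : ∀ i ∈ s, 0 ≤ w i)
    (hx : ∀ i ∈ s, 0 ≤ x i) (ht : ∀ i ∈ s, 0 ≤ t i ∧ t i ≤ M) :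
    -(M / (c - u) * ∑ i ∈ s, w i * x i) ≤ ((∑ i ∈ s, w i * t i * x i) - t k * x k) / (u - c) := by
  have hgain : ∑ i ∈ s, w i * t i * x i ≤ M * ∑ i ∈ s, w i * x i := by
    rw [Finset.mul_sum]
    refine Finset.sum_le_sum fun i hi => ?_
    have := mul_le_mul_of_nonneg_left (ht i hi).2 (mul_nonneg (hw i hi) (hx i hi))
    linarith
  have hloss : 0 ≤ t k * x k := mul_nonneg (ht k hk).1 (hx k hk)
  have hcu : 0 < c - u := sub_pos.mpr huc
  rw [show u - c = -(c - u) by ring, div_neg, neg_le_neg_iff, div_mul_eq_mul_div]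
  exact div_le_div_of_nonneg_right (by linarith) hcu.le

theorem stmt7_general
    (K : ℕ)
    (v ω : ℤ → ℝ)
    (hwpos : ∀ k ∈ Finset.Icc (-(K:ℤ)) (K:ℤ), 0 < ω k)
    (χS χN : ℝ) (hχS : χS ∈ Set.Ioo 0 (1/2 : ℝ)) (hχN : χN ∈ Set.Ioo 0 (1/2 : ℝ))
    (c : ℝ)
    (Tp Tm : ℝ → ℝ) (T : ℝ → ℝ → ℝ)
    (hTpdef : ∀ u : ℝ, Tp u = if 0 < u then 1 + χS - χN else 1 - χS + χN)
    (hTdef : ∀ z u : ℝ, T z u = if 0 < z then Tp u else Tm u)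
    (f : ℝ → ℤ → ℝ)
    (hfc : ∀ k ∈ Finset.Icc (-(K:ℤ)) (K:ℤ), Continuous fun z => f z k)
    (hfeq : ∀ z : ℝ, z ≠ 0 → ∀ k ∈ Finset.Icc (-(K:ℤ)) (K:ℤ),
      HasDerivAt (fun z' => f z' k)
        (((∑ k' ∈ Finset.Icc (-(K:ℤ)) (K:ℤ), ω k' * T z (v k' - c) * f z k') -
          T z (v k - c) * f z k) / (v k - c)) z)
    (hfpos : ∀ z : ℝ, ∀ k ∈ Finset.Icc (-(K:ℤ)) (K:ℤ), 0 < f z k)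
    (hfint : MeasureTheory.Integrable fun z => ∑ k ∈ Finset.Icc (-(K:ℤ)) (K:ℤ), ω k * f z k)
    (hfnorm : (∫ z : ℝ, ∑ k ∈ Finset.Icc (-(K:ℤ)) (K:ℤ), ω k * f z k) = 1)
    (hftop : ∀ k ∈ Finset.Icc (-(K:ℤ)) (K:ℤ), Filter.Tendsto (fun z => f z k) Filter.atTop (nhds 0)) :
    ∀ z : ℝ, 0 < z → ∀ k ∈ Finset.Icc (-(K:ℤ)) (K:ℤ), v k < c →
      f z k ≤ (1 + χS + χN) / (c - v k) := by
  intro z hz k hk hvk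
  obtain ⟨hχS0, hχS1⟩ := hχS
  obtain ⟨hχN0, hχN1⟩ := hχN
  have hrate : ∀ y > 0, ∀ u, 0 ≤ T y u ∧ T y u ≤ 1 + χS + χN := by
    intro y hy u
    rw [hTdef, if_pos hy, hTpdef]
    split_ifs <;> constructor <;> linarith
  have hle := le_add_mul_integral_of_neg_mul_le_deriv
    (div_nonneg (by linarith) (sub_pos.mpr hvk).le) (hfc k hk).continuousOn
    (fun y hy => hfeq y (hz.trans hy).ne' k hk) hfint
    (fun y => Finset.sum_nonneg fun i hi => (mul_pos (hwpos i hi) (hfpos y i hi)).le)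
    (fun y hy => neg_div_mul_sum_le_gain_sub_loss_div hk hvk (fun i hi => (hwpos i hi).le)
      (fun i hi => (hfpos y i hi).le) (fun i _ => hrate y (hz.trans hy) _))
    (hftop k hk)
  rwa [hfnorm, zero_add, mul_one] at hle

theorem stmt7
    (K : ℕ) (hK : 1 ≤ K)
    (v ω : ℤ → ℝ)
    (hv0 : v 0 = 0)
    (hvsym : ∀ k ∈ Finset.Icc (-(K:ℤ)) (K:ℤ), v (-k) = - v k)
    (hvmono : ∀ j ∈ Finset.Icc (-(K:ℤ)) (K:ℤ), ∀ k ∈ Finset.Icc (-(K:ℤ)) (K:ℤ), j < k → v j < v k)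
    (hwpos : ∀ k ∈ Finset.Icc (-(K:ℤ)) (K:ℤ), 0 < ω k)
    (hwsym : ∀ k ∈ Finset.Icc (-(K:ℤ)) (K:ℤ), ω (-k) = ω k)
    (hwsum : ∑ k ∈ Finset.Icc (-(K:ℤ)) (K:ℤ), ω k = 1)
    (χS χN : ℝ) (hχS : χS ∈ Set.Ioo 0 (1/2 : ℝ)) (hχN : χN ∈ Set.Ioo 0 (1/2 : ℝ))
    (c : ℝ) (hc0 : 0 < c) (hcK : c < v (K:ℤ))
    (hcv : ∀ k ∈ Finset.Icc (-(K:ℤ)) (K:ℤ), c ≠ v k)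
    (Tp Tm : ℝ → ℝ) (T : ℝ → ℝ → ℝ)
    (hTpdef : ∀ u : ℝ, Tp u = if 0 < u then 1 + χS - χN else 1 - χS + χN)
    (hTmdef : ∀ u : ℝ, Tm u = if 0 < u then 1 - χS - χN else 1 + χS + χN)
    (hTdef : ∀ z u : ℝ, T z u = if 0 < z then Tp u else Tm u)
    (f : ℝ → ℤ → ℝ)
    (hfc : ∀ k ∈ Finset.Icc (-(K:ℤ)) (K:ℤ), Continuous fun z => f z k)
    (hfeq : ∀ z : ℝ, z ≠ 0 → ∀ k ∈ Finset.Icc (-(K:ℤ)) (K:ℤ),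
      HasDerivAt (fun z' => f z' k)
        (((∑ k' ∈ Finset.Icc (-(K:ℤ)) (K:ℤ), ω k' * T z (v k' - c) * f z k') -
          T z (v k - c) * f z k) / (v k - c)) z)
    (hfpos : ∀ z : ℝ, ∀ k ∈ Finset.Icc (-(K:ℤ)) (K:ℤ), 0 < f z k)
    (hfint : MeasureTheory.Integrable fun z => ∑ k ∈ Finset.Icc (-(K:ℤ)) (K:ℤ), ω k * f z k)
    (hfnorm : (∫ z : ℝ, ∑ k ∈ Finset.Icc (-(K:ℤ)) (K:ℤ), ω k * f z k) = 1)
    (hftop : ∀ k ∈ Finset.Icc (-(K:ℤ)) (K:ℤ), Filter.Tendsto (fun z => f z k) Filter.atTop (nhds 0)) :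
    ∀ z : ℝ, 0 < z → ∀ k ∈ Finset.Icc (-(K:ℤ)) (K:ℤ), v k < c →
      f z k ≤ (1 + χS + χN) / (c - v k) :=
  stmt7_general K v ω hwpos χS χN hχS hχN c Tp Tm T hTpdef hTdef f hfc hfeq hfpos hfint hfnorm hftop
end

section
/- If λ and μ are two distinct real numbers each satisfying the right dispersion relation, then the following orthogonality identity holds: Σ_k ω_k (v_k − c) T₊(v_k − c) / [(T₊(v_k − c) − λ(v_k − c))(T₊(v_k − c) − μ(v_k − c))] = 0. -/
lemma div_sub_div_eq_mul_div_mul {𝕜 : Type*} [Field 𝕜] {T x lam mu : 𝕜}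
    (hlam : T - lam * x ≠ 0) (hmu : T - mu * x ≠ 0) :
    T / (T - lam * x) - T / (T - mu * x) =
      (lam - mu) * (x * T / ((T - lam * x) * (T - mu * x))) := by
  rw [div_sub_div _ _ hlam hmu, mul_div_assoc']
  ring

theorem sum_mul_div_mul_eq_zero_of_sum_div_eq {ι 𝕜 : Type*} [Field 𝕜] {s : Finset ι}
    {w x T : ι → 𝕜} {lam mu : 𝕜} (hne : lam ≠ mu)
    (hlam : ∀ k ∈ s, T k - lam * x k ≠ 0) (hmu : ∀ k ∈ s, T k - mu * x k ≠ 0)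
    (hsum : ∑ k ∈ s, w k * T k / (T k - lam * x k) = ∑ k ∈ s, w k * T k / (T k - mu * x k)) :
    ∑ k ∈ s, w k * x k * T k / ((T k - lam * x k) * (T k - mu * x k)) = 0 := by
  have hdiff : (lam - mu) * ∑ k ∈ s, w k * x k * T k / ((T k - lam * x k) * (T k - mu * x k))
      = ∑ k ∈ s, w k * T k / (T k - lam * x k) - ∑ k ∈ s, w k * T k / (T k - mu * x k) := by
    rw [Finset.mul_sum, ← Finset.sum_sub_distrib]
    refine Finset.sum_congr rfl fun k hk => ?_
    linear_combination -w k * div_sub_div_eq_mul_div_mul (hlam k hk) (hmu k hk)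
  rw [hsum, sub_self] at hdiff
  exact (mul_eq_zero.mp hdiff).resolve_left (sub_ne_zero.mpr hne)

theorem stmt8_general
    (K : ℕ)
    (v ω : ℤ → ℝ)
    (c : ℝ)
    (Tp : ℝ → ℝ)
    (lam mu : ℝ) (hne : lam ≠ mu)
    (hlam : (∀ k ∈ Finset.Icc (-(K:ℤ)) (K:ℤ), Tp (v k - c) - lam * (v k - c) ≠ 0) ∧
      (∑ k ∈ Finset.Icc (-(K:ℤ)) (K:ℤ), ω k * Tp (v k - c) / (Tp (v k - c) - lam * (v k - c))) = 1)
    (hmu : (∀ k ∈ Finset.Icc (-(K:ℤ)) (K:ℤ), Tp (v k - c) - mu * (v k - c) ≠ 0) ∧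
      (∑ k ∈ Finset.Icc (-(K:ℤ)) (K:ℤ), ω k * Tp (v k - c) / (Tp (v k - c) - mu * (v k - c))) = 1) :
    (∑ k ∈ Finset.Icc (-(K:ℤ)) (K:ℤ),
        ω k * (v k - c) * Tp (v k - c) /
          ((Tp (v k - c) - lam * (v k - c)) * (Tp (v k - c) - mu * (v k - c)))) = 0 :=
  sum_mul_div_mul_eq_zero_of_sum_div_eq hne hlam.1 hmu.1 (hlam.2.trans hmu.2.symm)

theorem stmt8
    (K : ℕ) (hK : 1 ≤ K)
    (v ω : ℤ → ℝ)
    (hv0 : v 0 = 0)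
    (hvsym : ∀ k ∈ Finset.Icc (-(K:ℤ)) (K:ℤ), v (-k) = - v k)
    (hvmono : ∀ j ∈ Finset.Icc (-(K:ℤ)) (K:ℤ), ∀ k ∈ Finset.Icc (-(K:ℤ)) (K:ℤ), j < k → v j < v k)
    (hwpos : ∀ k ∈ Finset.Icc (-(K:ℤ)) (K:ℤ), 0 < ω k)
    (hwsym : ∀ k ∈ Finset.Icc (-(K:ℤ)) (K:ℤ), ω (-k) = ω k)
    (hwsum : ∑ k ∈ Finset.Icc (-(K:ℤ)) (K:ℤ), ω k = 1)
    (χS χN : ℝ) (hχS : χS ∈ Set.Ioo 0 (1/2 : ℝ)) (hχN : χN ∈ Set.Ioo 0 (1/2 : ℝ))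
    (c : ℝ) (hc0 : 0 < c) (hcK : c < v (K:ℤ))
    (hcv : ∀ k ∈ Finset.Icc (-(K:ℤ)) (K:ℤ), c ≠ v k)
    (Tp : ℝ → ℝ)
    (hTpdef : ∀ u : ℝ, Tp u = if 0 < u then 1 + χS - χN else 1 - χS + χN)
    (lam mu : ℝ) (hne : lam ≠ mu)
    (hlam : (∀ k ∈ Finset.Icc (-(K:ℤ)) (K:ℤ), Tp (v k - c) - lam * (v k - c) ≠ 0) ∧
      (∑ k ∈ Finset.Icc (-(K:ℤ)) (K:ℤ), ω k * Tp (v k - c) / (Tp (v k - c) - lam * (v k - c))) = 1)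
    (hmu : (∀ k ∈ Finset.Icc (-(K:ℤ)) (K:ℤ), Tp (v k - c) - mu * (v k - c) ≠ 0) ∧
      (∑ k ∈ Finset.Icc (-(K:ℤ)) (K:ℤ), ω k * Tp (v k - c) / (Tp (v k - c) - mu * (v k - c))) = 1) :
    (∑ k ∈ Finset.Icc (-(K:ℤ)) (K:ℤ),
        ω k * (v k - c) * Tp (v k - c) /
          ((Tp (v k - c) - lam * (v k - c)) * (Tp (v k - c) - mu * (v k - c)))) = 0 :=
  stmt8_general K v ω c Tp lam mu hne hlam hmu
end

section
/- If λ and μ are two distinct nonzero real numbers each satisfying the right dispersion relation, then Σ_k ω_k (v_k − c)² / [(T₊(v_k − c) − λ(v_k − c))(T₊(v_k − c) − μ(v_k − c))] = 0. -/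
/-!
Multiplying the dispersion relation by `1 = ∑ ω_k` turns it into the vanishing of the first moment
`∑ ω_k (v_k - c) / (T₊ - λ (v_k - c))`, since `λ a / (T - λ a) = T / (T - λ a) - 1`. The claimed
sum is, by partial fractions, the difference of the first moments at `λ` and `μ` divided by `λ - μ`.
-/

open Finset

section DispersionRelation

variable {ι 𝕜 : Type*} [Field 𝕜] {s : Finset ι} {ω a T : ι → 𝕜}

theorem mul_div_sub_mul_eq_div_sub_one {x y t : 𝕜} (h : y - t * x ≠ 0) :
    t * (x / (y - t * x)) = y / (y - t * x) - 1 := by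
  field_simp
  ring

theorem sub_mul_sq_div_mul_eq_sub {x y l m : 𝕜} (hl : y - l * x ≠ 0) (hm : y - m * x ≠ 0) :
    (l - m) * (x ^ 2 / ((y - l * x) * (y - m * x))) = x / (y - l * x) - x / (y - m * x) := by
  field_simp
  ring

theorem sum_mul_div_eq_zero_of_sum_mul_div_eq_one (hω : ∑ k ∈ s, ω k = 1) {t : 𝕜} (ht : t ≠ 0)
    (hden : ∀ k ∈ s, T k - t * a k ≠ 0) (hdisp : ∑ k ∈ s, ω k * T k / (T k - t * a k) = 1) :
    ∑ k ∈ s, ω k * a k / (T k - t * a k) = 0 := by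
  have h : t * ∑ k ∈ s, ω k * a k / (T k - t * a k) = 0 := by
    calc t * ∑ k ∈ s, ω k * a k / (T k - t * a k)
        = ∑ k ∈ s, (ω k * T k / (T k - t * a k) - ω k) := by
          rw [mul_sum]
          refine sum_congr rfl fun k hk => ?_
          rw [mul_div_assoc, mul_left_comm, mul_div_sub_mul_eq_div_sub_one (hden k hk)]
          ring
      _ = 0 := by rw [sum_sub_distrib, hdisp, hω, sub_self]
  exact (mul_eq_zero.mp h).resolve_left ht

theorem sum_mul_sq_div_eq_zero_of_sum_mul_div_eq_one (hω : ∑ k ∈ s, ω k = 1) {l m : 𝕜}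
    (hlm : l ≠ m) (hl : l ≠ 0) (hm : m ≠ 0)
    (hdenl : ∀ k ∈ s, T k - l * a k ≠ 0) (hdispl : ∑ k ∈ s, ω k * T k / (T k - l * a k) = 1)
    (hdenm : ∀ k ∈ s, T k - m * a k ≠ 0) (hdispm : ∑ k ∈ s, ω k * T k / (T k - m * a k) = 1) :
    ∑ k ∈ s, ω k * a k ^ 2 / ((T k - l * a k) * (T k - m * a k)) = 0 := by
  have h : (l - m) * ∑ k ∈ s, ω k * a k ^ 2 / ((T k - l * a k) * (T k - m * a k)) = 0 := by
    calc (l - m) * ∑ k ∈ s, ω k * a k ^ 2 / ((T k - l * a k) * (T k - m * a k))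
        = ∑ k ∈ s, (ω k * a k / (T k - l * a k) - ω k * a k / (T k - m * a k)) := by
          rw [mul_sum]
          refine sum_congr rfl fun k hk => ?_
          rw [mul_div_assoc, mul_left_comm, sub_mul_sq_div_mul_eq_sub (hdenl k hk) (hdenm k hk)]
          ring
      _ = 0 := by
          rw [sum_sub_distrib, sum_mul_div_eq_zero_of_sum_mul_div_eq_one hω hl hdenl hdispl,
            sum_mul_div_eq_zero_of_sum_mul_div_eq_one hω hm hdenm hdispm, sub_self]
  exact (mul_eq_zero.mp h).resolve_left (sub_ne_zero.mpr hlm)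

end DispersionRelation

theorem stmt9_general
    (K : ℕ)
    (v ω : ℤ → ℝ)
    (hwsum : ∑ k ∈ Finset.Icc (-(K:ℤ)) (K:ℤ), ω k = 1)
    (c : ℝ)
    (Tp : ℝ → ℝ)
    (lam mu : ℝ) (hne : lam ≠ mu) (hlam0 : lam ≠ 0) (hmu0 : mu ≠ 0)
    (hlam : (∀ k ∈ Finset.Icc (-(K:ℤ)) (K:ℤ), Tp (v k - c) - lam * (v k - c) ≠ 0) ∧
      (∑ k ∈ Finset.Icc (-(K:ℤ)) (K:ℤ), ω k * Tp (v k - c) / (Tp (v k - c) - lam * (v k - c))) = 1)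
    (hmu : (∀ k ∈ Finset.Icc (-(K:ℤ)) (K:ℤ), Tp (v k - c) - mu * (v k - c) ≠ 0) ∧
      (∑ k ∈ Finset.Icc (-(K:ℤ)) (K:ℤ), ω k * Tp (v k - c) / (Tp (v k - c) - mu * (v k - c))) = 1) :
    (∑ k ∈ Finset.Icc (-(K:ℤ)) (K:ℤ),
        ω k * (v k - c) ^ 2 /
          ((Tp (v k - c) - lam * (v k - c)) * (Tp (v k - c) - mu * (v k - c)))) = 0 :=
  sum_mul_sq_div_eq_zero_of_sum_mul_div_eq_one (a := fun k => v k - c) (T := fun k => Tp (v k - c))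
    hwsum hne hlam0 hmu0 hlam.1 hlam.2 hmu.1 hmu.2

theorem stmt9
    (K : ℕ) (hK : 1 ≤ K)
    (v ω : ℤ → ℝ)
    (hv0 : v 0 = 0)
    (hvsym : ∀ k ∈ Finset.Icc (-(K:ℤ)) (K:ℤ), v (-k) = - v k)
    (hvmono : ∀ j ∈ Finset.Icc (-(K:ℤ)) (K:ℤ), ∀ k ∈ Finset.Icc (-(K:ℤ)) (K:ℤ), j < k → v j < v k)
    (hwpos : ∀ k ∈ Finset.Icc (-(K:ℤ)) (K:ℤ), 0 < ω k)
    (hwsym : ∀ k ∈ Finset.Icc (-(K:ℤ)) (K:ℤ), ω (-k) = ω k)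
    (hwsum : ∑ k ∈ Finset.Icc (-(K:ℤ)) (K:ℤ), ω k = 1)
    (χS χN : ℝ) (hχS : χS ∈ Set.Ioo 0 (1/2 : ℝ)) (hχN : χN ∈ Set.Ioo 0 (1/2 : ℝ))
    (c : ℝ) (hc0 : 0 < c) (hcK : c < v (K:ℤ))
    (hcv : ∀ k ∈ Finset.Icc (-(K:ℤ)) (K:ℤ), c ≠ v k)
    (Tp : ℝ → ℝ)
    (hTpdef : ∀ u : ℝ, Tp u = if 0 < u then 1 + χS - χN else 1 - χS + χN)
    (lam mu : ℝ) (hne : lam ≠ mu) (hlam0 : lam ≠ 0) (hmu0 : mu ≠ 0)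
    (hlam : (∀ k ∈ Finset.Icc (-(K:ℤ)) (K:ℤ), Tp (v k - c) - lam * (v k - c) ≠ 0) ∧
      (∑ k ∈ Finset.Icc (-(K:ℤ)) (K:ℤ), ω k * Tp (v k - c) / (Tp (v k - c) - lam * (v k - c))) = 1)
    (hmu : (∀ k ∈ Finset.Icc (-(K:ℤ)) (K:ℤ), Tp (v k - c) - mu * (v k - c) ≠ 0) ∧
      (∑ k ∈ Finset.Icc (-(K:ℤ)) (K:ℤ), ω k * Tp (v k - c) / (Tp (v k - c) - mu * (v k - c))) = 1) :
    (∑ k ∈ Finset.Icc (-(K:ℤ)) (K:ℤ),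
        ω k * (v k - c) ^ 2 /
          ((Tp (v k - c) - lam * (v k - c)) * (Tp (v k - c) - mu * (v k - c)))) = 0 :=
  stmt9_general K v ω hwsum c Tp lam mu hne hlam0 hmu0 hlam hmu
end

section
/- Let λ_{J+1}, …, λ_K be pairwise distinct real numbers each satisfying the right dispersion relation, let b_{J+1}, …, b_K be real coefficients, and set g(v_k) = Σ_{j=J+1}^{K} b_j/(T₊(v_k − c) − λ_j(v_k − c)) for each k. Then for every i ∈ {J+1,…,K} such that Σ_k ω_k (v_k − c) T₊(v_k − c)/(T₊(v_k − c) − λ_i(v_k − c))² ≠ 0, one has b_i = [Σ_k ω_k (v_k − c) g(v_k) T₊(v_k − c)/(T₊(v_k − c) − λ_i(v_k − c))] / [Σ_k ω_k (v_k − c) T₊(v_k − c)/(T₊(v_k − c) − λ_i(v_k − c))²]. -/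
/-!
Write `D_j(k) = T(v_k - c) - λ_j (v_k - c)`. Since `D_j - D_i = (λ_i - λ_j)(v_k - c)`, the partial
fractions `(v_k - c)/(D_i D_j) = (1/D_i - 1/D_j)/(λ_i - λ_j)` show that, for two distinct roots of
the dispersion relation, the weighted sum `Σ_k ω_k T (v_k - c)/(D_i D_j)` is `(1 - 1)/(λ_i - λ_j) = 0`.
So the functions `1/D_j` are orthogonal for the (indefinite) weight `ω_k (v_k - c) T(v_k - c)`, and
each coefficient `b_i` of `g = Σ_j b_j / D_j` is read off by pairing `g` with `1/D_i`.
-/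

open Finset

theorem Finset.sum_mul_div_mul_eq_zero_of_sum_div_eq {ι F : Type*} [Field F] (s : Finset ι)
    (w u T : ι → F) {a b : F} (hab : a ≠ b) (ha : ∀ k ∈ s, T k - a * u k ≠ 0) (hb : ∀ k ∈ s, T k - b * u k ≠ 0)
    (h : ∑ k ∈ s, w k / (T k - a * u k) = ∑ k ∈ s, w k / (T k - b * u k)) :
    ∑ k ∈ s, w k * u k / ((T k - a * u k) * (T k - b * u k)) = 0 := by
  have partial_fractions : ∀ k ∈ s, w k * u k / ((T k - a * u k) * (T k - b * u k)) =
      (w k / (T k - a * u k) - w k / (T k - b * u k)) / (a - b) := by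
    intro k hk
    have hak := ha k hk
    have hbk := hb k hk
    rw [div_sub_div _ _ hak hbk, div_div, div_eq_div_iff (mul_ne_zero hak hbk)
      (mul_ne_zero (mul_ne_zero hak hbk) (sub_ne_zero.mpr hab))]
    ring
  rw [sum_congr rfl partial_fractions, ← sum_div, sum_sub_distrib, h, sub_self, zero_div]

theorem Finset.sum_mul_mul_eq_mul_sum_sq_of_orthogonal {ι κ R : Type*} [CommSemiring R]
    (s : Finset ι) (t : Finset κ) (m g : ι → R) (f : κ → ι → R) (b : κ → R) (hg : ∀ k ∈ s, g k = ∑ j ∈ t, b j * f j k)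
    {i : κ} (hi : i ∈ t) (horth : ∀ j ∈ t, j ≠ i → ∑ k ∈ s, m k * f i k * f j k = 0) :
    ∑ k ∈ s, m k * g k * f i k = b i * ∑ k ∈ s, m k * f i k ^ 2 := by
  calc ∑ k ∈ s, m k * g k * f i k
      = ∑ k ∈ s, ∑ j ∈ t, b j * (m k * f i k * f j k) := by
        refine sum_congr rfl fun k hk => ?_
        rw [hg k hk, mul_sum, sum_mul]
        refine sum_congr rfl fun j _ => ?_
        ring
    _ = ∑ j ∈ t, b j * ∑ k ∈ s, m k * f i k * f j k := by
        rw [sum_comm]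
        simp only [mul_sum]
    _ = b i * ∑ k ∈ s, m k * f i k * f i k :=
        sum_eq_single_of_mem i hi fun j hj hji => by rw [horth j hj hji, mul_zero]
    _ = b i * ∑ k ∈ s, m k * f i k ^ 2 := by simp only [mul_assoc, sq]

theorem stmt10_general
    (K : ℕ)
    (v ω : ℤ → ℝ)
    (c : ℝ)
    (J : ℤ)
    (Tp : ℝ → ℝ)
    (lam b : ℤ → ℝ)
    (hdist : ∀ i ∈ Finset.Icc (J+1) (K:ℤ), ∀ j ∈ Finset.Icc (J+1) (K:ℤ), i ≠ j → lam i ≠ lam j)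
    (hdisp : ∀ j ∈ Finset.Icc (J+1) (K:ℤ),
      (∀ k ∈ Finset.Icc (-(K:ℤ)) (K:ℤ), Tp (v k - c) - lam j * (v k - c) ≠ 0) ∧
      (∑ k ∈ Finset.Icc (-(K:ℤ)) (K:ℤ), ω k * Tp (v k - c) / (Tp (v k - c) - lam j * (v k - c))) = 1)
    (g : ℤ → ℝ)
    (hg : ∀ k ∈ Finset.Icc (-(K:ℤ)) (K:ℤ),
      g k = ∑ j ∈ Finset.Icc (J+1) (K:ℤ), b j / (Tp (v k - c) - lam j * (v k - c))) :
    ∀ i ∈ Finset.Icc (J+1) (K:ℤ),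
      (∑ k ∈ Finset.Icc (-(K:ℤ)) (K:ℤ),
          ω k * (v k - c) * Tp (v k - c) / (Tp (v k - c) - lam i * (v k - c)) ^ 2) ≠ 0 →
      b i =
        (∑ k ∈ Finset.Icc (-(K:ℤ)) (K:ℤ),
            ω k * (v k - c) * g k * Tp (v k - c) / (Tp (v k - c) - lam i * (v k - c))) /
          (∑ k ∈ Finset.Icc (-(K:ℤ)) (K:ℤ),
            ω k * (v k - c) * Tp (v k - c) / (Tp (v k - c) - lam i * (v k - c)) ^ 2) := by
  intro i hi hS
  set f : ℤ → ℤ → ℝ := fun j k => (Tp (v k - c) - lam j * (v k - c))⁻¹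
  have horth : ∀ j ∈ Icc (J+1) (K:ℤ), j ≠ i →
      ∑ k ∈ Icc (-(K:ℤ)) K, ω k * (v k - c) * Tp (v k - c) * f i k * f j k = 0 := by
    intro j hj hji
    rw [← sum_mul_div_mul_eq_zero_of_sum_div_eq _ (fun k => ω k * Tp (v k - c)) (fun k => v k - c)
      (fun k => Tp (v k - c)) (hdist i hi j hj hji.symm) (hdisp i hi).1 (hdisp j hj).1
      ((hdisp i hi).2.trans (hdisp j hj).2.symm)]
    refine sum_congr rfl fun k _ => ?_
    simp only [f, div_eq_mul_inv, mul_inv]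
    ring
  have hg' : ∀ k ∈ Icc (-(K:ℤ)) K, g k = ∑ j ∈ Icc (J+1) (K:ℤ), b j * f j k := by
    simpa only [div_eq_mul_inv] using hg
  rw [eq_div_iff hS]
  calc b i * ∑ k ∈ Icc (-(K:ℤ)) K,
        ω k * (v k - c) * Tp (v k - c) / (Tp (v k - c) - lam i * (v k - c)) ^ 2
      = b i * ∑ k ∈ Icc (-(K:ℤ)) K, ω k * (v k - c) * Tp (v k - c) * f i k ^ 2 := by
        simp only [f, div_eq_mul_inv, inv_pow]
    _ = ∑ k ∈ Icc (-(K:ℤ)) K, ω k * (v k - c) * Tp (v k - c) * g k * f i k :=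
        (sum_mul_mul_eq_mul_sum_sq_of_orthogonal _ _ _ g f b hg' hi horth).symm
    _ = _ := sum_congr rfl fun k _ => by simp only [f, div_eq_mul_inv]; ring

theorem stmt10
    (K : ℕ) (hK : 1 ≤ K)
    (v ω : ℤ → ℝ)
    (hv0 : v 0 = 0)
    (hvsym : ∀ k ∈ Finset.Icc (-(K:ℤ)) (K:ℤ), v (-k) = - v k)
    (hvmono : ∀ j ∈ Finset.Icc (-(K:ℤ)) (K:ℤ), ∀ k ∈ Finset.Icc (-(K:ℤ)) (K:ℤ), j < k → v j < v k)
    (hwpos : ∀ k ∈ Finset.Icc (-(K:ℤ)) (K:ℤ), 0 < ω k)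
    (hwsym : ∀ k ∈ Finset.Icc (-(K:ℤ)) (K:ℤ), ω (-k) = ω k)
    (hwsum : ∑ k ∈ Finset.Icc (-(K:ℤ)) (K:ℤ), ω k = 1)
    (χS χN : ℝ) (hχS : χS ∈ Set.Ioo 0 (1/2 : ℝ)) (hχN : χN ∈ Set.Ioo 0 (1/2 : ℝ))
    (c : ℝ) (hc0 : 0 < c) (hcK : c < v (K:ℤ))
    (hcv : ∀ k ∈ Finset.Icc (-(K:ℤ)) (K:ℤ), c ≠ v k)
    (J : ℤ) (hJ0 : 0 ≤ J) (hJK : J < (K:ℤ)) (hvJ : v J < c) (hvJ1 : c < v (J+1))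
    (Tp : ℝ → ℝ)
    (hTpdef : ∀ u : ℝ, Tp u = if 0 < u then 1 + χS - χN else 1 - χS + χN)
    (lam b : ℤ → ℝ)
    (hdist : ∀ i ∈ Finset.Icc (J+1) (K:ℤ), ∀ j ∈ Finset.Icc (J+1) (K:ℤ), i ≠ j → lam i ≠ lam j)
    (hdisp : ∀ j ∈ Finset.Icc (J+1) (K:ℤ),
      (∀ k ∈ Finset.Icc (-(K:ℤ)) (K:ℤ), Tp (v k - c) - lam j * (v k - c) ≠ 0) ∧
      (∑ k ∈ Finset.Icc (-(K:ℤ)) (K:ℤ), ω k * Tp (v k - c) / (Tp (v k - c) - lam j * (v k - c))) = 1)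
    (g : ℤ → ℝ)
    (hg : ∀ k ∈ Finset.Icc (-(K:ℤ)) (K:ℤ),
      g k = ∑ j ∈ Finset.Icc (J+1) (K:ℤ), b j / (Tp (v k - c) - lam j * (v k - c))) :
    ∀ i ∈ Finset.Icc (J+1) (K:ℤ),
      (∑ k ∈ Finset.Icc (-(K:ℤ)) (K:ℤ),
          ω k * (v k - c) * Tp (v k - c) / (Tp (v k - c) - lam i * (v k - c)) ^ 2) ≠ 0 →
      b i =
        (∑ k ∈ Finset.Icc (-(K:ℤ)) (K:ℤ),
            ω k * (v k - c) * g k * Tp (v k - c) / (Tp (v k - c) - lam i * (v k - c))) /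
          (∑ k ∈ Finset.Icc (-(K:ℤ)) (K:ℤ),
            ω k * (v k - c) * Tp (v k - c) / (Tp (v k - c) - lam i * (v k - c)) ^ 2) :=
  stmt10_general K v ω c J Tp lam b hdist hdisp g hg
end

section
/- Let λ_{J+1}, …, λ_K be pairwise distinct nonzero real numbers each satisfying the right dispersion relation, let b_{J+1}, …, b_K be real coefficients, and set g(v_k) = Σ_{j=J+1}^{K} b_j/(T₊(v_k − c) − λ_j(v_k − c)) for each k. Then for every i ∈ {J+1,…,K} and every k ∈ {−K,…,K}: √(ω_k) · |b_i| · |v_k − c| / |T₊(v_k − c) − λ_i(v_k − c)| ≤ max_{k'} ( |g(v_{k'})| · |v_{k'} − c| ). -/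
/-!
Write `φ_j(k) = (v_k - c) / (T₊(v_k - c) - λ_j (v_k - c))`. Since `T/(T - λu) = 1 + λ u/(T - λu)`,
for `λ_j ≠ 0` the dispersion relation says exactly that `φ_j` has zero `ω`-mean, and the
partial-fraction identity `(λ_i - λ_j) φ_i φ_j = φ_i - φ_j` then makes the `φ_j` orthogonal in
`L²(ω)`. As `g(v_k)(v_k - c) = Σ_j b_j φ_j(k)`, pairing with `φ_i` isolates `b_i ‖φ_i‖²`, and
bounding this pairing by `max_k |g(v_k)| |v_k - c|` times `‖φ_i‖_{L¹(ω)} ≤ ‖φ_i‖_{L²(ω)}` gives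
`|b_i| ‖φ_i‖ ≤ max_k |g(v_k)| |v_k - c|`; a single term of `‖φ_i‖²` is the left-hand side squared.
-/

open Finset

variable {ι κ : Type*}

noncomputable def dispersionMode (T u : ι → ℝ) (μ : ℝ) (m : ι) : ℝ := u m / (T m - μ * u m)

section Dispersion

variable {I : Finset ι} {w T u : ι → ℝ}

theorem sum_mul_dispersionMode_eq_zero {μ : ℝ} (hμ : μ ≠ 0) (hD : ∀ m ∈ I, T m - μ * u m ≠ 0)
    (hw : ∑ m ∈ I, w m = 1) (hdisp : ∑ m ∈ I, w m * T m / (T m - μ * u m) = 1) :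
    ∑ m ∈ I, w m * dispersionMode T u μ m = 0 := by
  have hsplit : ∀ m ∈ I,
      w m * T m / (T m - μ * u m) = w m + μ * (w m * dispersionMode T u μ m) := by
    intro m hm
    unfold dispersionMode
    field_simp [hD m hm]
    ring
  rw [sum_congr rfl hsplit, sum_add_distrib, hw, ← mul_sum] at hdisp
  exact (mul_eq_zero.mp (by linarith)).resolve_left hμ

theorem sub_mul_dispersionMode_mul_dispersionMode {μ ν : ℝ} {m : ι} (hμ : T m - μ * u m ≠ 0)
    (hν : T m - ν * u m ≠ 0) :
    (μ - ν) * dispersionMode T u μ m * dispersionMode T u ν m =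
      dispersionMode T u μ m - dispersionMode T u ν m := by
  unfold dispersionMode
  field_simp
  ring

theorem sum_mul_dispersionMode_mul_dispersionMode_eq_zero {μ ν : ℝ} (hμν : μ ≠ ν)
    (hDμ : ∀ m ∈ I, T m - μ * u m ≠ 0) (hDν : ∀ m ∈ I, T m - ν * u m ≠ 0)
    (hμ : ∑ m ∈ I, w m * dispersionMode T u μ m = 0)
    (hν : ∑ m ∈ I, w m * dispersionMode T u ν m = 0) :
    ∑ m ∈ I, w m * dispersionMode T u μ m * dispersionMode T u ν m = 0 := by
  have h : (μ - ν) * ∑ m ∈ I, w m * dispersionMode T u μ m * dispersionMode T u ν m = 0 := by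
    calc (μ - ν) * ∑ m ∈ I, w m * dispersionMode T u μ m * dispersionMode T u ν m
        = ∑ m ∈ I, (w m * dispersionMode T u μ m - w m * dispersionMode T u ν m) := by
          rw [mul_sum]
          refine sum_congr rfl fun m hm => ?_
          rw [← mul_sub, ← sub_mul_dispersionMode_mul_dispersionMode (hDμ m hm) (hDν m hm)]
          ring
      _ = 0 := by rw [sum_sub_distrib, hμ, hν, sub_zero]
  exact (mul_eq_zero.mp h).resolve_left (sub_ne_zero.mpr hμν)

end Dispersion

section WeightedL2

variable {I : Finset ι} {w : ι → ℝ}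

theorem sum_mul_sum_mul_eq_of_orthogonal {S : Finset κ} {φ : κ → ι → ℝ} (b : κ → ℝ)
    (horth : ∀ i ∈ S, ∀ j ∈ S, i ≠ j → ∑ m ∈ I, w m * φ i m * φ j m = 0) {i : κ} (hi : i ∈ S) :
    ∑ m ∈ I, w m * (∑ j ∈ S, b j * φ j m) * φ i m = b i * ∑ m ∈ I, w m * φ i m ^ 2 := by
  calc ∑ m ∈ I, w m * (∑ j ∈ S, b j * φ j m) * φ i m
      = ∑ j ∈ S, b j * ∑ m ∈ I, w m * φ i m * φ j m := by
        simp_rw [mul_sum, sum_mul]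
        rw [sum_comm]
        exact sum_congr rfl fun j _ => sum_congr rfl fun m _ => by ring
    _ = b i * ∑ m ∈ I, w m * φ i m * φ i m :=
        sum_eq_single_of_mem i hi fun j hj hji => by rw [horth i hi j hj hji.symm, mul_zero]
    _ = b i * ∑ m ∈ I, w m * φ i m ^ 2 := by simp_rw [mul_assoc, sq]

theorem sum_mul_abs_le_sqrt_sum_mul_sq (hw0 : ∀ m ∈ I, 0 ≤ w m) (hw : ∑ m ∈ I, w m = 1)
    (ψ : ι → ℝ) : ∑ m ∈ I, w m * |ψ m| ≤ √(∑ m ∈ I, w m * ψ m ^ 2) := by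
  refine Real.le_sqrt_of_sq_le ?_
  calc (∑ m ∈ I, w m * |ψ m|) ^ 2 ≤ (∑ m ∈ I, w m) * ∑ m ∈ I, w m * ψ m ^ 2 :=
        sum_sq_le_sum_mul_sum_of_sq_le_mul I hw0 (fun m hm => mul_nonneg (hw0 m hm) (sq_nonneg _))
          fun m _ => by rw [mul_pow, sq_abs]; exact le_of_eq (by ring)
    _ = ∑ m ∈ I, w m * ψ m ^ 2 := by rw [hw, one_mul]

theorem sqrt_mul_abs_le_sqrt_sum_mul_sq (hw0 : ∀ m ∈ I, 0 ≤ w m) (ψ : ι → ℝ) {k : ι}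
    (hk : k ∈ I) : √(w k) * |ψ k| ≤ √(∑ m ∈ I, w m * ψ m ^ 2) := by
  rw [← Real.sqrt_sq_eq_abs, ← Real.sqrt_mul (hw0 k hk)]
  exact Real.sqrt_le_sqrt (single_le_sum (fun m hm => mul_nonneg (hw0 m hm) (sq_nonneg _)) hk)

theorem abs_mul_sqrt_le_of_sum_mul_mul_eq (hw0 : ∀ m ∈ I, 0 ≤ w m) (hw : ∑ m ∈ I, w m = 1)
    {G ψ : ι → ℝ} {b M : ℝ} (hG : ∀ m ∈ I, |G m| ≤ M)
    (h : ∑ m ∈ I, w m * G m * ψ m = b * ∑ m ∈ I, w m * ψ m ^ 2) :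
    |b| * √(∑ m ∈ I, w m * ψ m ^ 2) ≤ M := by
  set Q := ∑ m ∈ I, w m * ψ m ^ 2
  obtain ⟨m₀, hm₀⟩ : I.Nonempty := nonempty_of_sum_ne_zero (by rw [hw]; exact one_ne_zero)
  have hM : 0 ≤ M := (abs_nonneg _).trans (hG m₀ hm₀)
  have hQ : 0 ≤ Q := sum_nonneg fun m hm => mul_nonneg (hw0 m hm) (sq_nonneg _)
  have key : |b| * √Q * √Q ≤ M * √Q :=
    calc |b| * √Q * √Q = |∑ m ∈ I, w m * G m * ψ m| := by
          rw [mul_assoc, Real.mul_self_sqrt hQ, h, abs_mul, abs_of_nonneg hQ]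
      _ ≤ ∑ m ∈ I, |w m * G m * ψ m| := abs_sum_le_sum_abs _ _
      _ ≤ ∑ m ∈ I, M * (w m * |ψ m|) := sum_le_sum fun m hm => by
          rw [abs_mul, abs_mul, abs_of_nonneg (hw0 m hm), mul_right_comm, mul_comm]
          exact mul_le_mul_of_nonneg_right (hG m hm) (mul_nonneg (hw0 m hm) (abs_nonneg _))
      _ ≤ M * √Q := by
          rw [← mul_sum]
          exact mul_le_mul_of_nonneg_left (sum_mul_abs_le_sqrt_sum_mul_sq hw0 hw ψ) hM
  rcases (Real.sqrt_nonneg Q).eq_or_lt with hQ0 | hQ0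
  · rw [← hQ0, mul_zero]; exact hM
  · exact le_of_mul_le_mul_right key hQ0

end WeightedL2

theorem stmt12
    (K : ℕ)
    (v ω : ℤ → ℝ)
    (hwpos : ∀ k ∈ Finset.Icc (-(K:ℤ)) (K:ℤ), 0 < ω k)
    (hwsum : ∑ k ∈ Finset.Icc (-(K:ℤ)) (K:ℤ), ω k = 1)
    (c : ℝ)
    (J : ℤ)
    (Tp : ℝ → ℝ)
    (lam b : ℤ → ℝ)
    (hdist : ∀ i ∈ Finset.Icc (J+1) (K:ℤ), ∀ j ∈ Finset.Icc (J+1) (K:ℤ), i ≠ j → lam i ≠ lam j)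
    (hlam0 : ∀ j ∈ Finset.Icc (J+1) (K:ℤ), lam j ≠ 0)
    (hdisp : ∀ j ∈ Finset.Icc (J+1) (K:ℤ),
      (∀ k ∈ Finset.Icc (-(K:ℤ)) (K:ℤ), Tp (v k - c) - lam j * (v k - c) ≠ 0) ∧
      (∑ k ∈ Finset.Icc (-(K:ℤ)) (K:ℤ), ω k * Tp (v k - c) / (Tp (v k - c) - lam j * (v k - c))) = 1)
    (g : ℤ → ℝ)
    (hg : ∀ k ∈ Finset.Icc (-(K:ℤ)) (K:ℤ),
      g k = ∑ j ∈ Finset.Icc (J+1) (K:ℤ), b j / (Tp (v k - c) - lam j * (v k - c))) :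
    ∀ i ∈ Finset.Icc (J+1) (K:ℤ), ∀ k ∈ Finset.Icc (-(K:ℤ)) (K:ℤ),
      Real.sqrt (ω k) * |b i| * |v k - c| / |Tp (v k - c) - lam i * (v k - c)| ≤
        (Finset.Icc (-(K:ℤ)) (K:ℤ)).sup' (Finset.nonempty_Icc.mpr (by omega))
          (fun k' => |g k'| * |v k' - c|) := by
  intro i hi k hk
  set φ : ℤ → ℤ → ℝ := fun j => dispersionMode (fun m => Tp (v m - c)) (fun m => v m - c) (lam j)
  have hw0 : ∀ m ∈ Icc (-(K:ℤ)) K, 0 ≤ ω m := fun m hm => (hwpos m hm).le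
  have hmean : ∀ j ∈ Icc (J + 1) (K:ℤ), ∑ m ∈ Icc (-(K:ℤ)) K, ω m * φ j m = 0 := fun j hj =>
    sum_mul_dispersionMode_eq_zero (hlam0 j hj) (hdisp j hj).1 hwsum (hdisp j hj).2
  have horth : ∀ i ∈ Icc (J + 1) (K:ℤ), ∀ j ∈ Icc (J + 1) (K:ℤ), i ≠ j →
      ∑ m ∈ Icc (-(K:ℤ)) K, ω m * φ i m * φ j m = 0 := fun i hi j hj hij =>
    sum_mul_dispersionMode_mul_dispersionMode_eq_zero (hdist i hi j hj hij) (hdisp i hi).1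
      (hdisp j hj).1 (hmean i hi) (hmean j hj)
  have hexpand : ∀ m ∈ Icc (-(K:ℤ)) K, g m * (v m - c) = ∑ j ∈ Icc (J + 1) (K:ℤ), b j * φ j m :=
    fun m hm => by
      rw [hg m hm, sum_mul]
      exact sum_congr rfl fun j _ => by simp only [φ, dispersionMode]; ring
  refine le_trans ?_ (abs_mul_sqrt_le_of_sum_mul_mul_eq hw0 hwsum (G := fun m => g m * (v m - c))
    (fun m hm => by simpa only [abs_mul] using le_sup' (fun k' => |g k'| * |v k' - c|) hm)
    ((sum_congr rfl fun m hm => by rw [hexpand m hm]).trans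
      (sum_mul_sum_mul_eq_of_orthogonal b horth hi)))
  calc √(ω k) * |b i| * |v k - c| / |Tp (v k - c) - lam i * (v k - c)|
      = |b i| * (√(ω k) * |φ i k|) := by simp only [φ, dispersionMode, abs_div]; ring
    _ ≤ |b i| * √(∑ m ∈ Icc (-(K:ℤ)) K, ω m * φ i m ^ 2) :=
        mul_le_mul_of_nonneg_left (sqrt_mul_abs_le_sqrt_sum_mul_sq hw0 (φ i) hk) (abs_nonneg _)
end

section
/- Let f be a profile that is positive everywhere, with f(z,v_k) → 0 as z → +∞ and as z → −∞ for every k, and assume that the tumbling flux I is non-increasing on (0,∞) and non-decreasing on (−∞,0). Then for every z > 0 and every index i with v_i > c, the following alternative holds: either T₊⁺ f(z,v_i) ≥ I(z), or for every index j with v_j > v_i one has f(z,v_j) < f(z,v_i). Equivalently, on the right half-line f is strictly decreasing with respect to velocity on the set of velocities v_i > c with T₊⁺ f(z,v_i) < I(z). -/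
/-!
For a velocity `v > c` each component obeys, on either half-line, the relaxation law
`(v - c) f' = I - τ f` with `τ = T₊⁺` for `z > 0` and `τ = T₋⁺` for `z < 0`. Multiplying by the
integrating factor `exp (τ z / (v - c))` turns the sign of `I'` into monotonicity:
`exp (τ z / (v_i - c)) (I - τ f_i)` is nondecreasing on the left half-line and tends to `0` at
`-∞`, so `T₋⁺ f_i ≤ I` there; it is nonincreasing on the right half-line, so `T₊⁺ f_i(z) < I(z)`
propagates back to all of `(0, z]`. For `v_i < v_j` the difference `f_i - f_j` obeys
`(f_i - f_j)' + τ (f_i - f_j) / (v_j - c) = ((v_i - c)⁻¹ - (v_j - c)⁻¹) (I - τ f_i)`, whose right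
side has the sign of `I - τ f_i`. The integrating factor `exp (τ z / (v_j - c))` then gives
`f_j ≤ f_i` on the left half-line (using the decay at `-∞`), hence at the interface by continuity,
and finally `f_j < f_i` at `z`.
-/

open Filter Set Real Topology

theorem hasDerivAt_exp_mul_mul {g : ℝ → ℝ} {g' p x : ℝ} (hg : HasDerivAt g g' x) :
    HasDerivAt (fun y => exp (p * y) * g y) (exp (p * x) * (g' + p * g x)) x := by
  refine (((hasDerivAt_id x).const_mul p).exp.fun_mul hg).congr_deriv ?_
  simp only [id, mul_one]
  ring

section IntegratingFactor

variable {D : Set ℝ} {g g' : ℝ → ℝ} {p : ℝ}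

theorem continuousOn_exp_mul_mul (hg : ContinuousOn g D) :
    ContinuousOn (fun x => exp (p * x) * g x) D :=
  (continuous_exp.comp (continuous_const_mul p)).continuousOn.mul hg

theorem monotoneOn_exp_mul_of_deriv_add_mul_nonneg (hD : Convex ℝ D) (hc : ContinuousOn g D)
    (hd : ∀ x ∈ interior D, HasDerivAt g (g' x) x) (h : ∀ x ∈ interior D, 0 ≤ g' x + p * g x) :
    MonotoneOn (fun x => exp (p * x) * g x) D :=
  monotoneOn_of_hasDerivWithinAt_nonneg hD (continuousOn_exp_mul_mul hc)
    (fun x hx => (hasDerivAt_exp_mul_mul (hd x hx)).hasDerivWithinAt)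
    (fun x hx => mul_nonneg (exp_pos _).le (h x hx))

theorem antitoneOn_exp_mul_of_deriv_add_mul_nonpos (hD : Convex ℝ D) (hc : ContinuousOn g D)
    (hd : ∀ x ∈ interior D, HasDerivAt g (g' x) x) (h : ∀ x ∈ interior D, g' x + p * g x ≤ 0) :
    AntitoneOn (fun x => exp (p * x) * g x) D :=
  antitoneOn_of_hasDerivWithinAt_nonpos hD (continuousOn_exp_mul_mul hc)
    (fun x hx => (hasDerivAt_exp_mul_mul (hd x hx)).hasDerivWithinAt)
    (fun x hx => mul_nonpos_of_nonneg_of_nonpos (exp_pos _).le (h x hx))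

theorem strictMonoOn_exp_mul_of_deriv_add_mul_pos (hD : Convex ℝ D) (hc : ContinuousOn g D)
    (hd : ∀ x ∈ interior D, HasDerivAt g (g' x) x) (h : ∀ x ∈ interior D, 0 < g' x + p * g x) :
    StrictMonoOn (fun x => exp (p * x) * g x) D :=
  strictMonoOn_of_hasDerivWithinAt_pos hD (continuousOn_exp_mul_mul hc)
    (fun x hx => (hasDerivAt_exp_mul_mul (hd x hx)).hasDerivWithinAt)
    (fun x hx => mul_pos (exp_pos _) (h x hx))

end IntegratingFactor

theorem MonotoneOn.le_of_tendsto_atBot {α β : Type*} [LinearOrder α] [TopologicalSpace β]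
    [Preorder β] [OrderClosedTopology β] {f : α → β} {a x : α} {l : β}
    (hf : MonotoneOn f (Iio a)) (hl : Tendsto f atBot (𝓝 l)) (hx : x < a) : l ≤ f x :=
  have : Nonempty α := ⟨x⟩
  le_of_tendsto hl (eventually_atBot.2 ⟨x, fun _ hy => hf (hy.trans_lt hx) hx hy⟩)

theorem tendsto_exp_mul_mul_atBot {g : ℝ → ℝ} {p : ℝ} (hp : 0 < p) (hg : Tendsto g atBot (𝓝 0)) :
    Tendsto (fun x => exp (p * x) * g x) atBot (𝓝 0) := by
  simpa using (tendsto_exp_atBot.comp (tendsto_id.const_mul_atBot hp)).mul hg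

section Relaxation

variable {I g gi gj : ℝ → ℝ} {a ℓ ℓi ℓj s t x : ℝ}

theorem mul_le_flux_of_relaxation_Iio (hp : 0 < a / ℓ)
    (hI : DifferentiableOn ℝ I (Iio t)) (hImono : MonotoneOn I (Iio t))
    (hg : ∀ x < t, HasDerivAt g ((I x - a * g x) / ℓ) x)
    (hIlim : Tendsto I atBot (𝓝 0)) (hglim : Tendsto g atBot (𝓝 0)) (hx : x < t) :
    a * g x ≤ I x := by
  have hI' : ∀ y < t, HasDerivAt I (deriv I y) y := fun y hy =>
    (hI.differentiableAt (Iio_mem_nhds hy)).hasDerivAt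
  have hmono : MonotoneOn (fun y => exp (a / ℓ * y) * (I y - a * g y)) (Iio t) := by
    have hd : ∀ y < t, HasDerivAt (fun y => I y - a * g y)
        (deriv I y - a * ((I y - a * g y) / ℓ)) y :=
      fun y hy => (hI' y hy).sub ((hg y hy).const_mul a)
    refine monotoneOn_exp_mul_of_deriv_add_mul_nonneg (convex_Iio t)
      (fun y hy => (hd y hy).continuousAt.continuousWithinAt)
      (fun y hy => hd y (interior_subset (s := Iio t) hy)) (fun y hy => ?_)
    replace hy : y ∈ Iio t := interior_subset hy
    have hI'nonneg : 0 ≤ deriv I y := by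
      rw [← derivWithin_of_isOpen isOpen_Iio hy]
      exact hImono.derivWithin_nonneg
    have : deriv I y - a * ((I y - a * g y) / ℓ) + a / ℓ * (I y - a * g y) = deriv I y := by
      ring
    simpa only [this] using hI'nonneg
  have hlim := tendsto_exp_mul_mul_atBot hp (by simpa using hIlim.sub (hglim.const_mul a))
  exact sub_nonneg.1 <|
    (mul_nonneg_iff_of_pos_left (exp_pos _)).1 (hmono.le_of_tendsto_atBot hlim hx)

theorem mul_lt_flux_of_relaxation_Ioi {z : ℝ}
    (hI : DifferentiableOn ℝ I (Ioi t)) (hIanti : AntitoneOn I (Ioi t))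
    (hg : ∀ x > t, HasDerivAt g ((I x - a * g x) / ℓ) x) (hz : a * g z < I z)
    (hx : t < x) (hxz : x ≤ z) : a * g x < I x := by
  have hI' : ∀ y > t, HasDerivAt I (deriv I y) y := fun y hy =>
    (hI.differentiableAt (Ioi_mem_nhds hy)).hasDerivAt
  have hanti : AntitoneOn (fun y => exp (a / ℓ * y) * (I y - a * g y)) (Ioi t) := by
    have hd : ∀ y > t, HasDerivAt (fun y => I y - a * g y)
        (deriv I y - a * ((I y - a * g y) / ℓ)) y :=
      fun y hy => (hI' y hy).sub ((hg y hy).const_mul a)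
    refine antitoneOn_exp_mul_of_deriv_add_mul_nonpos (convex_Ioi t)
      (fun y hy => (hd y hy).continuousAt.continuousWithinAt)
      (fun y hy => hd y (interior_subset (s := Ioi t) hy)) (fun y hy => ?_)
    replace hy : y ∈ Ioi t := interior_subset hy
    have hI'nonpos : deriv I y ≤ 0 := by
      rw [← derivWithin_of_isOpen isOpen_Ioi hy]
      exact hIanti.derivWithin_nonpos
    have : deriv I y - a * ((I y - a * g y) / ℓ) + a / ℓ * (I y - a * g y) = deriv I y := by
      ring
    simpa only [this] using hI'nonpos
  have hpos : 0 < exp (a / ℓ * z) * (I z - a * g z) := mul_pos (exp_pos _) (sub_pos.2 hz)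
  have := hpos.trans_le (hanti hx (hx.trans_le hxz) hxz)
  exact sub_pos.1 ((mul_pos_iff_of_pos_left (exp_pos _)).1 this)

theorem le_of_relaxation_Iio (ha : 0 < a) (hℓi : 0 < ℓi) (hℓ : ℓi ≤ ℓj)
    (hgi : ∀ x < t, HasDerivAt gi ((I x - a * gi x) / ℓi) x)
    (hgj : ∀ x < t, HasDerivAt gj ((I x - a * gj x) / ℓj) x)
    (hdom : ∀ x < t, a * gi x ≤ I x)
    (hgilim : Tendsto gi atBot (𝓝 0)) (hgjlim : Tendsto gj atBot (𝓝 0)) (hx : x < t) :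
    gj x ≤ gi x := by
  have hmono : MonotoneOn (fun y => exp (a / ℓj * y) * (gi y - gj y)) (Iio t) := by
    refine monotoneOn_exp_mul_of_deriv_add_mul_nonneg (convex_Iio t)
      (g' := fun y => (I y - a * gi y) / ℓi - (I y - a * gj y) / ℓj)
      (fun y hy => ((hgi y hy).continuousAt.sub (hgj y hy).continuousAt).continuousWithinAt)
      (fun y hy => ?_) (fun y hy => ?_) <;> rw [interior_Iio] at hy
    · exact (hgi y hy).sub (hgj y hy)
    · have : (I y - a * gi y) / ℓi - (I y - a * gj y) / ℓj + a / ℓj * (gi y - gj y) =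
          (ℓi⁻¹ - ℓj⁻¹) * (I y - a * gi y) := by
        ring
      simpa only [this] using
        mul_nonneg (sub_nonneg.2 (inv_anti₀ hℓi hℓ)) (sub_nonneg.2 (hdom y hy))
  have hlim := tendsto_exp_mul_mul_atBot (div_pos ha (hℓi.trans_le hℓ))
    (by simpa using hgilim.sub hgjlim)
  exact sub_nonneg.1 <|
    (mul_nonneg_iff_of_pos_left (exp_pos _)).1 (hmono.le_of_tendsto_atBot hlim hx)

theorem lt_of_relaxation_Icc (hℓi : 0 < ℓi) (hℓ : ℓi < ℓj) (hst : s < t)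
    (hci : ContinuousOn gi (Icc s t)) (hcj : ContinuousOn gj (Icc s t))
    (hgi : ∀ x ∈ Ioo s t, HasDerivAt gi ((I x - a * gi x) / ℓi) x)
    (hgj : ∀ x ∈ Ioo s t, HasDerivAt gj ((I x - a * gj x) / ℓj) x)
    (hdom : ∀ x ∈ Ioo s t, a * gi x < I x) (hs : gj s ≤ gi s) : gj t < gi t := by
  have hmono : StrictMonoOn (fun y => exp (a / ℓj * y) * (gi y - gj y)) (Icc s t) := by
    refine strictMonoOn_exp_mul_of_deriv_add_mul_pos (convex_Icc s t)
      (g' := fun y => (I y - a * gi y) / ℓi - (I y - a * gj y) / ℓj) (hci.sub hcj)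
      (fun y hy => ?_) (fun y hy => ?_) <;> rw [interior_Icc] at hy
    · exact (hgi y hy).sub (hgj y hy)
    · have : (I y - a * gi y) / ℓi - (I y - a * gj y) / ℓj + a / ℓj * (gi y - gj y) =
          (ℓi⁻¹ - ℓj⁻¹) * (I y - a * gi y) := by
        ring
      simpa only [this] using
        mul_pos (sub_pos.2 (inv_strictAnti₀ hℓi hℓ)) (sub_pos.2 (hdom y hy))
  have hs' : 0 ≤ exp (a / ℓj * s) * (gi s - gj s) := mul_nonneg (exp_pos _).le (sub_nonneg.2 hs)
  have := hs'.trans_lt (hmono (left_mem_Icc.2 hst.le) (right_mem_Icc.2 hst.le) hst)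
  exact sub_pos.1 ((mul_pos_iff_of_pos_left (exp_pos _)).1 this)

end Relaxation

theorem lt_of_relaxation_of_mul_lt_flux {I gi gj : ℝ → ℝ} {a b ℓi ℓj z : ℝ}
    (hb : 0 < b) (hℓi : 0 < ℓi) (hℓ : ℓi < ℓj)
    (hI_right : DifferentiableOn ℝ I (Ioi 0)) (hI_left : DifferentiableOn ℝ I (Iio 0))
    (hIanti : AntitoneOn I (Ioi 0)) (hImono : MonotoneOn I (Iio 0))
    (hIlim : Tendsto I atBot (𝓝 0))
    (hci : Continuous gi) (hcj : Continuous gj)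
    (hgi_right : ∀ x > 0, HasDerivAt gi ((I x - a * gi x) / ℓi) x)
    (hgj_right : ∀ x > 0, HasDerivAt gj ((I x - a * gj x) / ℓj) x)
    (hgi_left : ∀ x < 0, HasDerivAt gi ((I x - b * gi x) / ℓi) x)
    (hgj_left : ∀ x < 0, HasDerivAt gj ((I x - b * gj x) / ℓj) x)
    (hgilim : Tendsto gi atBot (𝓝 0)) (hgjlim : Tendsto gj atBot (𝓝 0))
    (hz : 0 < z) (hdom : a * gi z < I z) : gj z < gi z := by
  have hdom_left : ∀ x < 0, b * gi x ≤ I x := fun x hx =>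
    mul_le_flux_of_relaxation_Iio (div_pos hb hℓi) hI_left hImono hgi_left hIlim hgilim hx
  have hdom_right : ∀ x ∈ Ioo 0 z, a * gi x < I x := fun x hx =>
    mul_lt_flux_of_relaxation_Ioi hI_right hIanti hgi_right hdom hx.1 hx.2.le
  have hle_left : ∀ x < 0, gj x ≤ gi x := fun x hx =>
    le_of_relaxation_Iio hb hℓi hℓ.le hgi_left hgj_left hdom_left hgilim hgjlim hx
  have hle_zero : gj 0 ≤ gi 0 :=
    ContinuousWithinAt.closure_le (s := Iio 0) (by simp) hcj.continuousWithinAt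
      hci.continuousWithinAt fun x hx => hle_left x hx
  exact lt_of_relaxation_Icc hℓi hℓ hz hci.continuousOn hcj.continuousOn
    (fun x hx => hgi_right x hx.1) (fun x hx => hgj_right x hx.1) hdom_right hle_zero

theorem eventually_nhds_eq_of_ne_zero {β : Type*} {T : ℝ → β} {P M : β}
    (hT : ∀ z, T z = if 0 < z then P else M) {z : ℝ} (hz : z ≠ 0) : ∀ᶠ y in 𝓝 z, T y = T z := by
  rcases hz.lt_or_gt with hz | hz
  · filter_upwards [Iio_mem_nhds hz] with y hy
    simp only [hT, if_neg (not_lt.2 (show y < 0 from hy).le), if_neg hz.not_gt]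
  · filter_upwards [Ioi_mem_nhds hz] with y hy
    simp only [hT, if_pos (show 0 < y from hy), if_pos hz]

theorem eventually_atBot_eq_of_ite {β : Type*} {T : ℝ → β} {P M : β}
    (hT : ∀ z, T z = if 0 < z then P else M) : ∀ᶠ y in atBot, T y = M := by
  filter_upwards [Iic_mem_atBot 0] with y hy
  simp only [hT, if_neg (not_lt.2 (show y ≤ 0 from hy))]

theorem differentiableAt_sum_mul_of_eventuallyEq {ι : Type*} {s : Finset ι} {w f : ℝ → ι → ℝ}
    {z : ℝ} (hw : ∀ᶠ y in 𝓝 z, w y = w z)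
    (hf : ∀ k ∈ s, DifferentiableAt ℝ (fun y => f y k) z) :
    DifferentiableAt ℝ (fun y => ∑ k ∈ s, w y k * f y k) z := by
  refine (DifferentiableAt.fun_sum fun k hk => (hf k hk).const_mul (w z k)).congr_of_eventuallyEq ?_
  filter_upwards [hw] with y hy
  simp only [hy]

theorem tendsto_sum_mul_of_eventuallyEq {ι α : Type*} {l : Filter α} {s : Finset ι}
    {w f : α → ι → ℝ} {w₀ : ι → ℝ} (hw : ∀ᶠ y in l, w y = w₀)
    (hf : ∀ k ∈ s, Tendsto (fun y => f y k) l (𝓝 0)) :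
    Tendsto (fun y => ∑ k ∈ s, w y k * f y k) l (𝓝 0) := by
  have h := tendsto_finsetSum s fun k hk => (hf k hk).const_mul (w₀ k)
  simp only [mul_zero, Finset.sum_const_zero] at h
  refine h.congr' ?_
  filter_upwards [hw] with y hy
  simp only [hy]

theorem stmt15_general
    (K : ℕ)
    (v ω : ℤ → ℝ)
    (χS χN : ℝ) (hχS : χS ∈ Set.Ioo 0 (1/2 : ℝ)) (hχN : χN ∈ Set.Ioo 0 (1/2 : ℝ))
    (c : ℝ)
    (Tp Tm : ℝ → ℝ) (T : ℝ → ℝ → ℝ)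
    (hTpdef : ∀ u : ℝ, Tp u = if 0 < u then 1 + χS - χN else 1 - χS + χN)
    (hTmdef : ∀ u : ℝ, Tm u = if 0 < u then 1 - χS - χN else 1 + χS + χN)
    (hTdef : ∀ z u : ℝ, T z u = if 0 < z then Tp u else Tm u)
    (f : ℝ → ℤ → ℝ)
    (hfc : ∀ k ∈ Finset.Icc (-(K:ℤ)) (K:ℤ), Continuous fun z => f z k)
    (hfeq : ∀ z : ℝ, z ≠ 0 → ∀ k ∈ Finset.Icc (-(K:ℤ)) (K:ℤ),
      HasDerivAt (fun z' => f z' k)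
        (((∑ k' ∈ Finset.Icc (-(K:ℤ)) (K:ℤ), ω k' * T z (v k' - c) * f z k') -
          T z (v k - c) * f z k) / (v k - c)) z)
    (hfbot : ∀ k ∈ Finset.Icc (-(K:ℤ)) (K:ℤ), Filter.Tendsto (fun z => f z k) Filter.atBot (nhds 0))
    (hImono : AntitoneOn (fun z => ∑ k ∈ Finset.Icc (-(K:ℤ)) (K:ℤ), ω k * T z (v k - c) * f z k) (Set.Ioi 0))
    (hImono' : MonotoneOn (fun z => ∑ k ∈ Finset.Icc (-(K:ℤ)) (K:ℤ), ω k * T z (v k - c) * f z k) (Set.Iio 0)) :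
    ∀ z : ℝ, 0 < z → ∀ i ∈ Finset.Icc (-(K:ℤ)) (K:ℤ), c < v i →
      (∑ k ∈ Finset.Icc (-(K:ℤ)) (K:ℤ), ω k * T z (v k - c) * f z k) ≤ (1 + χS - χN) * f z i ∨
      ∀ j ∈ Finset.Icc (-(K:ℤ)) (K:ℤ), v i < v j → f z j < f z i := by
  intro z₀ hz₀ i hi hci
  refine or_iff_not_imp_left.2 fun hdom j hj hij => ?_
  set Φ : ℝ → ℝ := fun z => ∑ k ∈ Finset.Icc (-(K:ℤ)) (K:ℤ), ω k * T z (v k - c) * f z k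
  have hT : ∀ z, T z = if 0 < z then Tp else Tm := fun z => funext fun u => by
    rw [hTdef]; split_ifs <;> rfl
  have hΦ_diff : ∀ z ≠ 0, DifferentiableAt ℝ Φ z := fun z hz =>
    differentiableAt_sum_mul_of_eventuallyEq (w := fun y k => ω k * T y (v k - c))
      (by filter_upwards [eventually_nhds_eq_of_ne_zero hT hz] with y hy; simp only [hy])
      fun k hk => (hfeq z hz k hk).differentiableAt
  have hΦ_lim : Tendsto Φ atBot (𝓝 0) :=
    tendsto_sum_mul_of_eventuallyEq (w := fun y k => ω k * T y (v k - c))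
      (w₀ := fun k => ω k * Tm (v k - c))
      (by filter_upwards [eventually_atBot_eq_of_ite hT] with y hy; simp only [hy]) hfbot
  have hODE_right : ∀ m ∈ Finset.Icc (-(K:ℤ)) (K:ℤ), c < v m → ∀ z > 0,
      HasDerivAt (fun z => f z m) ((Φ z - (1 + χS - χN) * f z m) / (v m - c)) z := by
    intro m hm hcm z hz
    have hTm : T z (v m - c) = 1 + χS - χN := by simp [hTdef, hTpdef, hz, hcm]
    simpa only [hTm] using hfeq z hz.ne' m hm
  have hODE_left : ∀ m ∈ Finset.Icc (-(K:ℤ)) (K:ℤ), c < v m → ∀ z < 0,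
      HasDerivAt (fun z => f z m) ((Φ z - (1 - χS - χN) * f z m) / (v m - c)) z := by
    intro m hm hcm z hz
    have hTm : T z (v m - c) = 1 - χS - χN := by simp [hTdef, hTmdef, hz.not_gt, hcm]
    simpa only [hTm] using hfeq z hz.ne m hm
  have hcj : c < v j := hci.trans hij
  exact lt_of_relaxation_of_mul_lt_flux (by linarith [hχS.2, hχN.2]) (sub_pos.2 hci)
    (by linarith) (fun z hz => (hΦ_diff z hz.ne').differentiableWithinAt)
    (fun z hz => (hΦ_diff z hz.ne).differentiableWithinAt) hImono hImono' hΦ_lim (hfc i hi)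
    (hfc j hj) (hODE_right i hi hci) (hODE_right j hj hcj) (hODE_left i hi hci)
    (hODE_left j hj hcj) (hfbot i hi) (hfbot j hj) hz₀ (not_le.1 hdom)

theorem stmt15
    (K : ℕ) (hK : 1 ≤ K)
    (v ω : ℤ → ℝ)
    (hv0 : v 0 = 0)
    (hvsym : ∀ k ∈ Finset.Icc (-(K:ℤ)) (K:ℤ), v (-k) = - v k)
    (hvmono : ∀ j ∈ Finset.Icc (-(K:ℤ)) (K:ℤ), ∀ k ∈ Finset.Icc (-(K:ℤ)) (K:ℤ), j < k → v j < v k)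
    (hwpos : ∀ k ∈ Finset.Icc (-(K:ℤ)) (K:ℤ), 0 < ω k)
    (hwsym : ∀ k ∈ Finset.Icc (-(K:ℤ)) (K:ℤ), ω (-k) = ω k)
    (hwsum : ∑ k ∈ Finset.Icc (-(K:ℤ)) (K:ℤ), ω k = 1)
    (χS χN : ℝ) (hχS : χS ∈ Set.Ioo 0 (1/2 : ℝ)) (hχN : χN ∈ Set.Ioo 0 (1/2 : ℝ))
    (c : ℝ) (hc0 : 0 < c) (hcK : c < v (K:ℤ))
    (hcv : ∀ k ∈ Finset.Icc (-(K:ℤ)) (K:ℤ), c ≠ v k)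
    (Tp Tm : ℝ → ℝ) (T : ℝ → ℝ → ℝ)
    (hTpdef : ∀ u : ℝ, Tp u = if 0 < u then 1 + χS - χN else 1 - χS + χN)
    (hTmdef : ∀ u : ℝ, Tm u = if 0 < u then 1 - χS - χN else 1 + χS + χN)
    (hTdef : ∀ z u : ℝ, T z u = if 0 < z then Tp u else Tm u)
    (f : ℝ → ℤ → ℝ)
    (hfc : ∀ k ∈ Finset.Icc (-(K:ℤ)) (K:ℤ), Continuous fun z => f z k)
    (hfeq : ∀ z : ℝ, z ≠ 0 → ∀ k ∈ Finset.Icc (-(K:ℤ)) (K:ℤ),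
      HasDerivAt (fun z' => f z' k)
        (((∑ k' ∈ Finset.Icc (-(K:ℤ)) (K:ℤ), ω k' * T z (v k' - c) * f z k') -
          T z (v k - c) * f z k) / (v k - c)) z)
    (hfpos : ∀ z : ℝ, ∀ k ∈ Finset.Icc (-(K:ℤ)) (K:ℤ), 0 < f z k)
    (hftop : ∀ k ∈ Finset.Icc (-(K:ℤ)) (K:ℤ), Filter.Tendsto (fun z => f z k) Filter.atTop (nhds 0))
    (hfbot : ∀ k ∈ Finset.Icc (-(K:ℤ)) (K:ℤ), Filter.Tendsto (fun z => f z k) Filter.atBot (nhds 0))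
    (hImono : AntitoneOn (fun z => ∑ k ∈ Finset.Icc (-(K:ℤ)) (K:ℤ), ω k * T z (v k - c) * f z k) (Set.Ioi 0))
    (hImono' : MonotoneOn (fun z => ∑ k ∈ Finset.Icc (-(K:ℤ)) (K:ℤ), ω k * T z (v k - c) * f z k) (Set.Iio 0)) :
    ∀ z : ℝ, 0 < z → ∀ i ∈ Finset.Icc (-(K:ℤ)) (K:ℤ), c < v i →
      (∑ k ∈ Finset.Icc (-(K:ℤ)) (K:ℤ), ω k * T z (v k - c) * f z k) ≤ (1 + χS - χN) * f z i ∨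
      ∀ j ∈ Finset.Icc (-(K:ℤ)) (K:ℤ), v i < v j → f z j < f z i :=
  stmt15_general K v ω χS χN hχS hχN c Tp Tm T hTpdef hTmdef hTdef f hfc hfeq hfbot hImono hImono'
end

section
/- Let f be a profile that is positive everywhere, with f(z,v_k) → 0 as z → +∞ and as z → −∞ for every k, and assume that the tumbling flux I is non-increasing on (0,∞) and non-decreasing on (−∞,0). Define ρ⁺(z) = Σ_{k : v_k > c} ω_k f(z,v_k) and ρ⁻(z) = Σ_{k : v_k < c} ω_k f(z,v_k). Then both ρ⁺ and ρ⁻ are strictly decreasing on (0,∞), and both ρ⁺ and ρ⁻ are strictly increasing on (−∞,0). -/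
/-!
Write `u_k = v_k - c`. On each half-line the profile solves `u_k F_k' = I - a_k F_k` with a
nonincreasing flux `I`, where `a_k = A` for `u_k > 0` and `a_k = B` for `u_k < 0`. For `u_k < 0`,
a Gronwall argument together with `F_k → 0` at infinity gives `B F_k < I`, i.e. `F_k' < 0`; this is
the claim for `ρ⁻` on the right. For `u_j > 0` the weighted excesses `(A F_j - I) exp (A z / u_j)`
have derivative `-I' exp (A z / u_j) ≥ 0`, so comparing them from `z = 0` (where `F_j(0)` is
nonincreasing in `u_j` by the same Gronwall argument on the other half-line) shows that the sign of
`A F_j - I` changes at most once, from `+` to `-`, as `u_j` increases. Since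
`∑ w_j (A F_j - I) = ∑_{u_k < 0} w_k (I - B F_k) > 0`, this single crossing forces
`∑_{u_j > 0} w_j (A F_j - I) / u_j > 0`, which is `(ρ⁺)' < 0`. The left half-line is the right one
after `z ↦ -z`.
-/

open Filter Set Topology

theorem le_of_tendsto_of_hasDerivAt_le_mul {u u' : ℝ → ℝ} {a C L : ℝ} (hC : 0 ≤ C)
    (hcont : ContinuousOn u (Ici a)) (hderiv : ∀ x ∈ Ioi a, HasDerivAt u (u' x) x)
    (hu' : ∀ x ∈ Ioi a, u' x ≤ C * u x) (ha : u a ≤ 0) (hL : Tendsto u atTop (𝓝 L)) :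
    L ≤ u a := by
  have hexp : ∀ x, HasDerivAt (fun x => Real.exp (-(C * x))) (Real.exp (-(C * x)) * -C) x :=
    fun x => ((hasDerivAt_id x).const_mul C).neg.exp.congr_deriv (by simp)
  -- `u x * exp (-C x)` is antitone, and `u a ≤ 0` makes `u a * exp (C (x - a)) ≤ u a`
  have hanti : AntitoneOn (fun x => u x * Real.exp (-(C * x))) (Ici a) := by
    refine antitoneOn_of_hasDerivWithinAt_nonpos (convex_Ici a)
      (f' := fun x => u' x * Real.exp (-(C * x)) + u x * (Real.exp (-(C * x)) * -C))
      (hcont.mul (by fun_prop)) (fun x hx => ?_) (fun x hx => ?_)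
    · rw [interior_Ici] at hx
      exact ((hderiv x hx).mul (hexp x)).hasDerivWithinAt
    · rw [interior_Ici] at hx
      have := hu' x hx
      have := Real.exp_pos (-(C * x))
      nlinarith
  have hle : ∀ x ∈ Ici a, u x ≤ u a := fun x hx => by
    have hmul := hanti self_mem_Ici hx hx
    have hexp_le : Real.exp (-(C * x)) ≤ Real.exp (-(C * a)) :=
      Real.exp_le_exp.2 (by nlinarith [mem_Ici.1 hx])
    have := Real.exp_pos (-(C * x))
    simp only at hmul
    nlinarith
  exact le_of_tendsto hL (eventually_ge_atTop a |>.mono hle)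

theorem div_le_div_of_threshold {x t τ : ℝ} (ht : 0 < t) (hτ : 0 < τ)
    (hpos : 0 < x → t ≤ τ) (hnonpos : x ≤ 0 → τ ≤ t) : x / τ ≤ x / t := by
  rcases lt_or_ge 0 x with hx | hx
  · exact div_le_div_of_nonneg_left hx.le ht (hpos hx)
  · rw [div_le_div_iff₀ hτ ht]
    nlinarith [hnonpos hx]

theorem sum_mul_div_pos_of_single_crossing {ι : Type*} {s : Finset ι} {w x t : ι → ℝ}
    (hw : ∀ j ∈ s, 0 ≤ w j) (ht : ∀ j ∈ s, 0 < t j)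
    (hcross : ∀ i ∈ s, ∀ j ∈ s, x i ≤ 0 → 0 < x j → t j < t i)
    (hsum : 0 < ∑ j ∈ s, w j * x j) :
    0 < ∑ j ∈ s, w j * (x j / t j) := by
  obtain ⟨τ, hτ, hτpos, hτnonpos⟩ : ∃ τ > 0, (∀ j ∈ s, 0 < x j → t j ≤ τ) ∧
      (∀ j ∈ s, x j ≤ 0 → τ ≤ t j) := by
    by_cases hN : (s.filter (fun j => x j ≤ 0)).Nonempty
    · refine ⟨(s.filter (fun j => x j ≤ 0)).inf' hN t, ?_, fun j hj hxj => ?_, fun j hj hxj => ?_⟩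
      · obtain ⟨i, hi, hti⟩ := Finset.exists_mem_eq_inf' hN t
        exact hti ▸ ht i (Finset.mem_filter.1 hi).1
      · exact Finset.le_inf' hN t fun i hi =>
          (hcross i (Finset.mem_filter.1 hi).1 j hj (Finset.mem_filter.1 hi).2 hxj).le
      · exact Finset.inf'_le t (Finset.mem_filter.2 ⟨hj, hxj⟩)
    · have hne : s.Nonempty := Finset.nonempty_of_sum_ne_zero hsum.ne'
      refine ⟨∑ j ∈ s, t j, Finset.sum_pos ht hne, fun j hj _ => ?_, fun j hj hxj => ?_⟩
      · exact Finset.single_le_sum (fun i hi => (ht i hi).le) hj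
      · exact absurd ⟨j, Finset.mem_filter.2 ⟨hj, hxj⟩⟩ hN
  calc 0 < (∑ j ∈ s, w j * x j) / τ := div_pos hsum hτ
    _ = ∑ j ∈ s, w j * (x j / τ) := by simp_rw [Finset.sum_div, mul_div_assoc]
    _ ≤ ∑ j ∈ s, w j * (x j / t j) := Finset.sum_le_sum fun j hj =>
      mul_le_mul_of_nonneg_left
        (div_le_div_of_threshold (ht j hj) hτ (hτpos j hj) (hτnonpos j hj)) (hw j hj)

section HalfLine

variable {ι : Type*} (S : Finset ι) (w u : ι → ℝ) (A B : ℝ) (F : ℝ → ι → ℝ)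

-- `u k` is the relative speed `v_k - c`; on the right half-line `A = T₊⁺` and `B = T₊⁻`.
noncomputable def tumbleRate (k : ι) : ℝ := if 0 < u k then A else B

noncomputable def tumbleFlux (z : ℝ) : ℝ := ∑ k ∈ S, w k * tumbleRate u A B k * F z k

structure IsHalfLineProfile : Prop where
  continuousOn : ∀ k ∈ S, ContinuousOn (F · k) (Ici 0)
  hasDerivAt : ∀ z > 0, ∀ k ∈ S,
    HasDerivAt (F · k) ((tumbleFlux S w u A B F z - tumbleRate u A B k * F z k) / u k) z
  antitoneOn_tumbleFlux : AntitoneOn (tumbleFlux S w u A B F) (Ioi 0)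
  pos : ∀ z > 0, ∀ k ∈ S, 0 < F z k
  tendsto_atTop : ∀ k ∈ S, Tendsto (F · k) atTop (𝓝 0)

variable {S w u A B F}

theorem tumbleRate_of_pos {k : ι} (h : 0 < u k) : tumbleRate u A B k = A := if_pos h

theorem tumbleRate_of_nonpos {k : ι} (h : u k ≤ 0) : tumbleRate u A B k = B := if_neg h.not_gt

theorem sum_mul_tumbleRate_mul_sub_tumbleFlux (hw : ∑ k ∈ S, w k = 1) (z : ℝ) :
    ∑ k ∈ S, w k * (tumbleRate u A B k * F z k - tumbleFlux S w u A B F z) = 0 := by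
  simp only [mul_sub, Finset.sum_sub_distrib, ← Finset.sum_mul, hw, one_mul, tumbleFlux,
    mul_assoc, sub_self]

namespace IsHalfLineProfile

theorem continuousOn_tumbleFlux (hF : IsHalfLineProfile S w u A B F) :
    ContinuousOn (tumbleFlux S w u A B F) (Ici 0) :=
  continuousOn_finsetSum S fun k hk => (hF.continuousOn k hk).const_smul (w k * tumbleRate u A B k)

theorem differentiableAt_tumbleFlux (hF : IsHalfLineProfile S w u A B F) {z : ℝ} (hz : 0 < z) :
    DifferentiableAt ℝ (tumbleFlux S w u A B F) z := by
  unfold tumbleFlux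
  exact DifferentiableAt.fun_sum fun k hk =>
    ((hF.hasDerivAt z hz k hk).differentiableAt.const_mul (w k * tumbleRate u A B k))

theorem deriv_tumbleFlux_nonpos (hF : IsHalfLineProfile S w u A B F) {z : ℝ} (hz : 0 < z) :
    deriv (tumbleFlux S w u A B F) z ≤ 0 := by
  rw [← derivWithin_of_mem_nhds (Ioi_mem_nhds hz)]
  exact hF.antitoneOn_tumbleFlux.derivWithin_nonpos

theorem mul_lt_tumbleFlux (hF : IsHalfLineProfile S w u A B F) (hB : 0 < B) {k : ι} (hk : k ∈ S)
    (huk : u k < 0) {z : ℝ} (hz : 0 < z) : B * F z k < tumbleFlux S w u A B F z := by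
  set I := tumbleFlux S w u A B F
  by_contra! hle
  have hrate : tumbleRate u A B k = B := tumbleRate_of_nonpos huk.le
  have key := le_of_tendsto_of_hasDerivAt_le_mul (u := fun x => I z - B * F x k)
    (C := B / -u k) (a := z) (L := I z) (div_nonneg hB.le (neg_nonneg.2 huk.le))
    (continuousOn_const.sub (((hF.continuousOn k hk).mono (Ici_subset_Ici.2 hz.le)).const_smul B))
    (fun x hx => ((hF.hasDerivAt x (hz.trans hx) k hk).const_mul B).const_sub (I z))
    (fun x hx => by
      have hIx : I x ≤ I z := hF.antitoneOn_tumbleFlux hz (hz.trans hx) (le_of_lt hx)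
      rw [hrate, show -(B * ((I x - B * F x k) / u k)) = B / -u k * (I x - B * F x k) by
        field_simp]
      exact mul_le_mul_of_nonneg_left (by linarith) (div_nonneg hB.le (neg_nonneg.2 huk.le)))
    (by linarith) (by simpa using ((hF.tendsto_atTop k hk).const_mul B).const_sub (I z))
  nlinarith [hF.pos z hz k hk]

theorem apply_zero_le_of_lt_of_neg (hF : IsHalfLineProfile S w u A B F) (hB : 0 < B)
    {k l : ι} (hk : k ∈ S) (hl : l ∈ S) (hlk : u l < u k) (hk0 : u k < 0) : F 0 l ≤ F 0 k := by
  set I := tumbleFlux S w u A B F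
  by_contra! hlt
  have hl0 : u l < 0 := hlk.trans hk0
  have key := le_of_tendsto_of_hasDerivAt_le_mul (u := fun x => F x k - F x l)
    (C := B / -u k) (a := 0) (L := 0) (div_nonneg hB.le (neg_nonneg.2 hk0.le))
    ((hF.continuousOn k hk).sub (hF.continuousOn l hl))
    (fun x hx => (hF.hasDerivAt x hx k hk).sub (hF.hasDerivAt x hx l hl))
    (fun x hx => by
      have hflux : B * F x l < I x := hF.mul_lt_tumbleFlux hB hl hl0 hx
      have hinv : 1 / u k < 1 / u l := one_div_lt_one_div_of_neg_of_lt hk0 hlk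
      rw [tumbleRate_of_nonpos hk0.le, tumbleRate_of_nonpos hl0.le]
      have hgap : B / -u k * (F x k - F x l) - ((I x - B * F x k) / u k - (I x - B * F x l) / u l)
          = (I x - B * F x l) * (1 / u l - 1 / u k) := by
        field_simp
        ring
      nlinarith [mul_pos (sub_pos.2 hflux) (sub_pos.2 hinv)])
    (by simpa using hlt.le)
    (by simpa using (hF.tendsto_atTop k hk).sub (hF.tendsto_atTop l hl))
  linarith

theorem hasDerivAt_excess_mul_exp (hF : IsHalfLineProfile S w u A B F) {m : ι} (hm : m ∈ S)
    (hm0 : 0 < u m) {x : ℝ} (hx : 0 < x) :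
    HasDerivAt (fun y => (A * F y m - tumbleFlux S w u A B F y) * Real.exp (A / u m * y))
      (-deriv (tumbleFlux S w u A B F) x * Real.exp (A / u m * x)) x := by
  have hexp : HasDerivAt (fun y => Real.exp (A / u m * y))
      (Real.exp (A / u m * x) * (A / u m)) x :=
    ((hasDerivAt_id x).const_mul (A / u m)).exp.congr_deriv (by simp)
  have hexcess := ((hF.hasDerivAt x hx m hm).const_mul A).fun_sub
    (hF.differentiableAt_tumbleFlux hx).hasDerivAt
  refine (hexcess.mul hexp).congr_deriv ?_
  rw [tumbleRate_of_pos hm0]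
  field_simp
  ring

theorem excess_mul_exp_le (hF : IsHalfLineProfile S w u A B F) (hA : 0 ≤ A) {i j : ι}
    (hi : i ∈ S) (hj : j ∈ S) (hi0 : 0 < u i) (hij : u i < u j) (h0 : F 0 j ≤ F 0 i)
    {z : ℝ} (hz : 0 ≤ z) :
    (A * F z j - tumbleFlux S w u A B F z) * Real.exp (A / u j * z) ≤
      (A * F z i - tumbleFlux S w u A B F z) * Real.exp (A / u i * z) := by
  set I := tumbleFlux S w u A B F
  set G : ι → ℝ → ℝ := fun m y => (A * F y m - I y) * Real.exp (A / u m * y)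
  have hmono : MonotoneOn (fun y => G i y - G j y) (Ici 0) := by
    refine monotoneOn_of_hasDerivWithinAt_nonneg (convex_Ici 0)
      (f' := fun y => -deriv I y * Real.exp (A / u i * y) - -deriv I y * Real.exp (A / u j * y))
      ?_ (fun y hy => ?_) (fun y hy => ?_)
    · have hcont : ∀ m ∈ S, ContinuousOn (G m) (Ici 0) := fun m hm =>
        (((hF.continuousOn m hm).const_smul A).sub hF.continuousOn_tumbleFlux).mul (by fun_prop)
      exact (hcont i hi).sub (hcont j hj)
    · rw [interior_Ici] at hy
      exact ((hF.hasDerivAt_excess_mul_exp hi hi0 hy).sub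
        (hF.hasDerivAt_excess_mul_exp hj (hi0.trans hij) hy)).hasDerivWithinAt
    · rw [interior_Ici] at hy
      have hexp : Real.exp (A / u j * y) ≤ Real.exp (A / u i * y) :=
        Real.exp_le_exp.2 (mul_le_mul_of_nonneg_right
          (div_le_div_of_nonneg_left hA hi0 hij.le) (le_of_lt hy))
      nlinarith [hF.deriv_tumbleFlux_nonpos hy]
  have := hmono self_mem_Ici hz hz
  simp only [G, mul_zero, Real.exp_zero, mul_one] at this
  nlinarith

theorem sum_excess_div_pos (hF : IsHalfLineProfile S w u A B F) (hA : 0 ≤ A) (hB : 0 < B)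
    (hw : ∀ k ∈ S, 0 < w k) (hw1 : ∑ k ∈ S, w k = 1) (hu : ∀ k ∈ S, u k ≠ 0) (hinj : InjOn u S)
    (hneg : ∃ k ∈ S, u k < 0) (h0 : ∀ i ∈ S, ∀ j ∈ S, 0 < u i → u i < u j → F 0 j ≤ F 0 i)
    {z : ℝ} (hz : 0 < z) :
    0 < ∑ j ∈ S with 0 < u j, w j * ((A * F z j - tumbleFlux S w u A B F z) / u j) := by
  set I := tumbleFlux S w u A B F
  refine sum_mul_div_pos_of_single_crossing (fun j hj => (hw j (Finset.mem_filter.1 hj).1).le)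
    (fun j hj => (Finset.mem_filter.1 hj).2) ?_ ?_
  · intro i hi j hj hxi hxj
    obtain ⟨hiS, hi0⟩ := Finset.mem_filter.1 hi
    obtain ⟨hjS, hj0⟩ := Finset.mem_filter.1 hj
    by_contra! hij
    rcases hij.lt_or_eq with hlt | heq
    · have := hF.excess_mul_exp_le hA hiS hjS hi0 hlt (h0 i hiS j hjS hi0 hlt) hz.le
      nlinarith [Real.exp_pos (A / u i * z), Real.exp_pos (A / u j * z)]
    · rw [hinj hiS hjS heq] at hxi
      linarith
  · have hbal := sum_mul_tumbleRate_mul_sub_tumbleFlux (u := u) (A := A) (B := B) (F := F) hw1 z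
    rw [← Finset.sum_filter_add_sum_filter_not S (fun k => 0 < u k)] at hbal
    have hpos : ∑ j ∈ S with 0 < u j, w j * (A * F z j - I z) =
        ∑ j ∈ S with 0 < u j, w j * (tumbleRate u A B j * F z j - I z) :=
      Finset.sum_congr rfl fun j hj => by rw [tumbleRate_of_pos (Finset.mem_filter.1 hj).2]
    have hnonpos : ∑ k ∈ S with ¬0 < u k, w k * (tumbleRate u A B k * F z k - I z) < 0 := by
      obtain ⟨k₀, hk₀, hk₀neg⟩ := hneg
      refine Finset.sum_neg (fun k hk => ?_) ⟨k₀, Finset.mem_filter.2 ⟨hk₀, hk₀neg.not_gt⟩⟩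
      obtain ⟨hkS, hk⟩ := Finset.mem_filter.1 hk
      have huk : u k < 0 := (not_lt.1 hk).lt_of_ne (hu k hkS)
      rw [tumbleRate_of_nonpos huk.le]
      exact mul_neg_of_pos_of_neg (hw k hkS) (by linarith [hF.mul_lt_tumbleFlux hB hkS huk hz])
    linarith

theorem strictAntiOn_sum_filter (hF : IsHalfLineProfile S w u A B F) (p : ι → Prop)
    [DecidablePred p]
    (hderiv : ∀ z > 0, ∑ k ∈ S with p k,
      w k * ((tumbleFlux S w u A B F z - tumbleRate u A B k * F z k) / u k) < 0) :
    StrictAntiOn (fun z => ∑ k ∈ S with p k, w k * F z k) (Ici 0) := by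
  refine strictAntiOn_of_hasDerivWithinAt_neg (convex_Ici 0)
    (continuousOn_finsetSum _ fun k hk =>
      (hF.continuousOn k (Finset.mem_filter.1 hk).1).const_smul (w k)) (fun z hz => ?_)
    (fun z hz => hderiv z (by simpa using hz))
  rw [interior_Ici] at hz
  exact (HasDerivAt.fun_sum fun k hk =>
    (hF.hasDerivAt z hz k (Finset.mem_filter.1 hk).1).const_mul (w k)).hasDerivWithinAt

theorem strictAntiOn_sum_neg (hF : IsHalfLineProfile S w u A B F) (hB : 0 < B)
    (hw : ∀ k ∈ S, 0 < w k) (hneg : ∃ k ∈ S, u k < 0) :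
    StrictAntiOn (fun z => ∑ k ∈ S with u k < 0, w k * F z k) (Ici 0) := by
  refine hF.strictAntiOn_sum_filter _ fun z hz => ?_
  obtain ⟨k₀, hk₀, hk₀neg⟩ := hneg
  refine Finset.sum_neg (fun k hk => ?_) ⟨k₀, Finset.mem_filter.2 ⟨hk₀, hk₀neg⟩⟩
  obtain ⟨hkS, huk⟩ := Finset.mem_filter.1 hk
  rw [tumbleRate_of_nonpos huk.le]
  exact mul_neg_of_pos_of_neg (hw k hkS)
    (div_neg_of_pos_of_neg (by linarith [hF.mul_lt_tumbleFlux hB hkS huk hz]) huk)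

theorem strictAntiOn_sum_pos (hF : IsHalfLineProfile S w u A B F) (hA : 0 ≤ A) (hB : 0 < B)
    (hw : ∀ k ∈ S, 0 < w k) (hw1 : ∑ k ∈ S, w k = 1) (hu : ∀ k ∈ S, u k ≠ 0) (hinj : InjOn u S)
    (hneg : ∃ k ∈ S, u k < 0) (h0 : ∀ i ∈ S, ∀ j ∈ S, 0 < u i → u i < u j → F 0 j ≤ F 0 i) :
    StrictAntiOn (fun z => ∑ k ∈ S with 0 < u k, w k * F z k) (Ici 0) := by
  refine hF.strictAntiOn_sum_filter _ fun z hz => ?_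
  have := hF.sum_excess_div_pos hA hB hw hw1 hu hinj hneg h0 hz
  rw [← neg_pos, ← Finset.sum_neg_distrib]
  refine this.trans_eq (Finset.sum_congr rfl fun k hk => ?_)
  rw [tumbleRate_of_pos (Finset.mem_filter.1 hk).2]
  ring

theorem apply_zero_le_of_reflect {u' : ι → ℝ} {A' B' : ℝ} {G : ℝ → ι → ℝ}
    (hG : IsHalfLineProfile S w u' A' B' G) (hB' : 0 < B') (hu' : ∀ k ∈ S, u' k = -u k)
    (hGF : ∀ k ∈ S, G 0 k = F 0 k) :
    ∀ i ∈ S, ∀ j ∈ S, 0 < u i → u i < u j → F 0 j ≤ F 0 i := by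
  intro i hi j hj hi0 hij
  rw [← hGF i hi, ← hGF j hj]
  exact hG.apply_zero_le_of_lt_of_neg hB' hi hj (by linarith [hu' i hi, hu' j hj])
    (by linarith [hu' i hi])

theorem of_rate {r : ℝ → ι → ℝ} (hr : ∀ z > 0, ∀ k ∈ S, r z k = tumbleRate u A B k)
    (hcont : ∀ k ∈ S, ContinuousOn (F · k) (Ici 0))
    (hderiv : ∀ z > 0, ∀ k ∈ S,
      HasDerivAt (F · k) ((∑ j ∈ S, w j * r z j * F z j - r z k * F z k) / u k) z)
    (hanti : AntitoneOn (fun z => ∑ k ∈ S, w k * r z k * F z k) (Ioi 0))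
    (hpos : ∀ z > 0, ∀ k ∈ S, 0 < F z k) (htop : ∀ k ∈ S, Tendsto (F · k) atTop (𝓝 0)) :
    IsHalfLineProfile S w u A B F := by
  have hflux : ∀ z > 0, ∑ k ∈ S, w k * r z k * F z k = tumbleFlux S w u A B F z :=
    fun z hz => Finset.sum_congr rfl fun k hk => by rw [hr z hz k hk]
  refine ⟨hcont, fun z hz k hk => ?_, fun x hx y hy hxy => ?_, hpos, htop⟩
  · simpa only [hflux z hz, hr z hz k hk] using hderiv z hz k hk
  · simpa only [hflux x hx, hflux y hy] using hanti hx hy hxy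

theorem of_rate_comp_neg {r : ℝ → ι → ℝ}
    (hr : ∀ z < 0, ∀ k ∈ S, r z k = tumbleRate (fun k => -u k) A B k)
    (hcont : ∀ k ∈ S, ContinuousOn (F · k) (Iic 0))
    (hderiv : ∀ z < 0, ∀ k ∈ S,
      HasDerivAt (F · k) ((∑ j ∈ S, w j * r z j * F z j - r z k * F z k) / u k) z)
    (hmono : MonotoneOn (fun z => ∑ k ∈ S, w k * r z k * F z k) (Iio 0))
    (hpos : ∀ z < 0, ∀ k ∈ S, 0 < F z k) (hbot : ∀ k ∈ S, Tendsto (F · k) atBot (𝓝 0)) :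
    IsHalfLineProfile S w (fun k => -u k) A B (fun z k => F (-z) k) := by
  refine of_rate (r := fun z k => r (-z) k) (fun z hz k hk => hr (-z) (by linarith) k hk)
    (fun k hk => (hcont k hk).comp continuousOn_neg fun z hz => by simpa using hz)
    (fun z hz k hk => ?_) (fun x hx y hy hxy => hmono (by simpa using hy) (by simpa using hx)
      (by linarith)) (fun z hz k hk => hpos (-z) (by linarith) k hk)
    (fun k hk => (hbot k hk).comp tendsto_neg_atTop_atBot)
  refine ((hderiv (-z) (by linarith) k hk).comp z (hasDerivAt_neg z)).congr_deriv ?_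
  rw [div_neg]
  ring

end IsHalfLineProfile

end HalfLine

theorem strictMonoOn_Iio_of_strictAntiOn_comp_neg {g : ℝ → ℝ}
    (h : StrictAntiOn (fun z => g (-z)) (Ici 0)) : StrictMonoOn g (Iio 0) := fun x hx y hy hxy => by
  simpa using h (mem_Ici.2 (neg_nonneg.2 hy.le)) (mem_Ici.2 (neg_nonneg.2 hx.le)) (neg_lt_neg hxy)

theorem stmt16_general
    (K : ℕ)
    (v ω : ℤ → ℝ)
    (hv0 : v 0 = 0)
    (hvmono : ∀ j ∈ Finset.Icc (-(K:ℤ)) (K:ℤ), ∀ k ∈ Finset.Icc (-(K:ℤ)) (K:ℤ), j < k → v j < v k)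
    (hwpos : ∀ k ∈ Finset.Icc (-(K:ℤ)) (K:ℤ), 0 < ω k)
    (hwsum : ∑ k ∈ Finset.Icc (-(K:ℤ)) (K:ℤ), ω k = 1)
    (χS χN : ℝ) (hχS : χS ∈ Set.Ioo 0 (1/2 : ℝ)) (hχN : χN ∈ Set.Ioo 0 (1/2 : ℝ))
    (c : ℝ) (hc0 : 0 < c) (hcK : c < v (K:ℤ))
    (hcv : ∀ k ∈ Finset.Icc (-(K:ℤ)) (K:ℤ), c ≠ v k)
    (Tp Tm : ℝ → ℝ) (T : ℝ → ℝ → ℝ)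
    (hTpdef : ∀ u : ℝ, Tp u = if 0 < u then 1 + χS - χN else 1 - χS + χN)
    (hTmdef : ∀ u : ℝ, Tm u = if 0 < u then 1 - χS - χN else 1 + χS + χN)
    (hTdef : ∀ z u : ℝ, T z u = if 0 < z then Tp u else Tm u)
    (f : ℝ → ℤ → ℝ)
    (hfc : ∀ k ∈ Finset.Icc (-(K:ℤ)) (K:ℤ), Continuous fun z => f z k)
    (hfeq : ∀ z : ℝ, z ≠ 0 → ∀ k ∈ Finset.Icc (-(K:ℤ)) (K:ℤ),
      HasDerivAt (fun z' => f z' k)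
        (((∑ k' ∈ Finset.Icc (-(K:ℤ)) (K:ℤ), ω k' * T z (v k' - c) * f z k') -
          T z (v k - c) * f z k) / (v k - c)) z)
    (hfpos : ∀ z : ℝ, ∀ k ∈ Finset.Icc (-(K:ℤ)) (K:ℤ), 0 < f z k)
    (hftop : ∀ k ∈ Finset.Icc (-(K:ℤ)) (K:ℤ), Filter.Tendsto (fun z => f z k) Filter.atTop (nhds 0))
    (hfbot : ∀ k ∈ Finset.Icc (-(K:ℤ)) (K:ℤ), Filter.Tendsto (fun z => f z k) Filter.atBot (nhds 0))
    (hImono : AntitoneOn (fun z => ∑ k ∈ Finset.Icc (-(K:ℤ)) (K:ℤ), ω k * T z (v k - c) * f z k) (Set.Ioi 0))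
    (hImono' : MonotoneOn (fun z => ∑ k ∈ Finset.Icc (-(K:ℤ)) (K:ℤ), ω k * T z (v k - c) * f z k) (Set.Iio 0)) :
    StrictAntiOn (fun z => ∑ k ∈ (Finset.Icc (-(K:ℤ)) (K:ℤ)).filter (fun k => c < v k), ω k * f z k) (Set.Ioi 0) ∧
    StrictAntiOn (fun z => ∑ k ∈ (Finset.Icc (-(K:ℤ)) (K:ℤ)).filter (fun k => v k < c), ω k * f z k) (Set.Ioi 0) ∧
    StrictMonoOn (fun z => ∑ k ∈ (Finset.Icc (-(K:ℤ)) (K:ℤ)).filter (fun k => c < v k), ω k * f z k) (Set.Iio 0) ∧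
    StrictMonoOn (fun z => ∑ k ∈ (Finset.Icc (-(K:ℤ)) (K:ℤ)).filter (fun k => v k < c), ω k * f z k) (Set.Iio 0) := by
  obtain ⟨hχS0, hχS1⟩ := hχS
  obtain ⟨hχN0, hχN1⟩ := hχN
  set S := Finset.Icc (-(K:ℤ)) (K:ℤ)
  have hR : IsHalfLineProfile S ω (fun k => v k - c) (1 + χS - χN) (1 - χS + χN) f :=
    .of_rate (r := fun z k => T z (v k - c))
      (fun z hz k _ => by simp [hTdef, hTpdef, tumbleRate, hz])
      (fun k hk => (hfc k hk).continuousOn) (fun z hz => hfeq z hz.ne') hImono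
      (fun z _ => hfpos z) hftop
  have hL : IsHalfLineProfile S ω (fun k => -(v k - c)) (1 + χS + χN) (1 - χS - χN)
      (fun z k => f (-z) k) :=
    .of_rate_comp_neg (r := fun z k => T z (v k - c)) (fun z hz k hk => by
        rcases (hcv k hk).lt_or_gt with h | h <;>
          simp [hTdef, hTmdef, tumbleRate, hz.not_gt, h, h.not_gt])
      (fun k hk => (hfc k hk).continuousOn) (fun z hz => hfeq z hz.ne) hImono'
      (fun z _ => hfpos z) hfbot
  have hv : InjOn v S := StrictMonoOn.injOn fun j hj k hk => hvmono j hj k hk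
  have hu : ∀ k ∈ S, v k - c ≠ 0 := fun k hk => sub_ne_zero.2 (hcv k hk).symm
  have hinj : InjOn (fun k => v k - c) S := fun a ha b hb h => hv ha hb (sub_left_inj.1 h)
  have hRneg : ∃ k ∈ S, v k - c < 0 := ⟨0, by simp [S], by linarith⟩
  have hLneg : ∃ k ∈ S, -(v k - c) < 0 := ⟨K, by simp [S], by linarith⟩
  have hR0 := hL.apply_zero_le_of_reflect (F := f) (by linarith) (fun _ _ => rfl) (by simp)
  have hL0 := hR.apply_zero_le_of_reflect (F := fun z k => f (-z) k) (by linarith)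
    (fun _ _ => (neg_neg _).symm) (fun _ _ => by simp)
  refine ⟨?_, ?_, ?_, ?_⟩
  · simpa only [sub_pos] using (hR.strictAntiOn_sum_pos (by linarith) (by linarith) hwpos hwsum
      hu hinj hRneg hR0).mono Ioi_subset_Ici_self
  · simpa only [sub_neg] using (hR.strictAntiOn_sum_neg (by linarith) hwpos hRneg).mono
      Ioi_subset_Ici_self
  · refine strictMonoOn_Iio_of_strictAntiOn_comp_neg ?_
    simpa only [neg_lt_zero, sub_pos] using hL.strictAntiOn_sum_neg (by linarith) hwpos hLneg
  · refine strictMonoOn_Iio_of_strictAntiOn_comp_neg ?_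
    simpa only [neg_pos, sub_neg] using hL.strictAntiOn_sum_pos (by linarith) (by linarith)
      hwpos hwsum (fun k hk => neg_ne_zero.2 (hu k hk)) (neg_injective.comp_injOn hinj) hLneg hL0

theorem stmt16
    (K : ℕ) (hK : 1 ≤ K)
    (v ω : ℤ → ℝ)
    (hv0 : v 0 = 0)
    (hvsym : ∀ k ∈ Finset.Icc (-(K:ℤ)) (K:ℤ), v (-k) = - v k)
    (hvmono : ∀ j ∈ Finset.Icc (-(K:ℤ)) (K:ℤ), ∀ k ∈ Finset.Icc (-(K:ℤ)) (K:ℤ), j < k → v j < v k)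
    (hwpos : ∀ k ∈ Finset.Icc (-(K:ℤ)) (K:ℤ), 0 < ω k)
    (hwsym : ∀ k ∈ Finset.Icc (-(K:ℤ)) (K:ℤ), ω (-k) = ω k)
    (hwsum : ∑ k ∈ Finset.Icc (-(K:ℤ)) (K:ℤ), ω k = 1)
    (χS χN : ℝ) (hχS : χS ∈ Set.Ioo 0 (1/2 : ℝ)) (hχN : χN ∈ Set.Ioo 0 (1/2 : ℝ))
    (c : ℝ) (hc0 : 0 < c) (hcK : c < v (K:ℤ))
    (hcv : ∀ k ∈ Finset.Icc (-(K:ℤ)) (K:ℤ), c ≠ v k)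
    (Tp Tm : ℝ → ℝ) (T : ℝ → ℝ → ℝ)
    (hTpdef : ∀ u : ℝ, Tp u = if 0 < u then 1 + χS - χN else 1 - χS + χN)
    (hTmdef : ∀ u : ℝ, Tm u = if 0 < u then 1 - χS - χN else 1 + χS + χN)
    (hTdef : ∀ z u : ℝ, T z u = if 0 < z then Tp u else Tm u)
    (f : ℝ → ℤ → ℝ)
    (hfc : ∀ k ∈ Finset.Icc (-(K:ℤ)) (K:ℤ), Continuous fun z => f z k)
    (hfeq : ∀ z : ℝ, z ≠ 0 → ∀ k ∈ Finset.Icc (-(K:ℤ)) (K:ℤ),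
      HasDerivAt (fun z' => f z' k)
        (((∑ k' ∈ Finset.Icc (-(K:ℤ)) (K:ℤ), ω k' * T z (v k' - c) * f z k') -
          T z (v k - c) * f z k) / (v k - c)) z)
    (hfpos : ∀ z : ℝ, ∀ k ∈ Finset.Icc (-(K:ℤ)) (K:ℤ), 0 < f z k)
    (hftop : ∀ k ∈ Finset.Icc (-(K:ℤ)) (K:ℤ), Filter.Tendsto (fun z => f z k) Filter.atTop (nhds 0))
    (hfbot : ∀ k ∈ Finset.Icc (-(K:ℤ)) (K:ℤ), Filter.Tendsto (fun z => f z k) Filter.atBot (nhds 0))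
    (hImono : AntitoneOn (fun z => ∑ k ∈ Finset.Icc (-(K:ℤ)) (K:ℤ), ω k * T z (v k - c) * f z k) (Set.Ioi 0))
    (hImono' : MonotoneOn (fun z => ∑ k ∈ Finset.Icc (-(K:ℤ)) (K:ℤ), ω k * T z (v k - c) * f z k) (Set.Iio 0)) :
    StrictAntiOn (fun z => ∑ k ∈ (Finset.Icc (-(K:ℤ)) (K:ℤ)).filter (fun k => c < v k), ω k * f z k) (Set.Ioi 0) ∧
    StrictAntiOn (fun z => ∑ k ∈ (Finset.Icc (-(K:ℤ)) (K:ℤ)).filter (fun k => v k < c), ω k * f z k) (Set.Ioi 0) ∧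
    StrictMonoOn (fun z => ∑ k ∈ (Finset.Icc (-(K:ℤ)) (K:ℤ)).filter (fun k => c < v k), ω k * f z k) (Set.Iio 0) ∧
    StrictMonoOn (fun z => ∑ k ∈ (Finset.Icc (-(K:ℤ)) (K:ℤ)).filter (fun k => v k < c), ω k * f z k) (Set.Iio 0) :=
  stmt16_general K v ω hv0 hvmono hwpos hwsum χS χN hχS hχN c hc0 hcK hcv Tp Tm T hTpdef hTmdef
    hTdef f hfc hfeq hfpos hftop hfbot hImono hImono'
end

section
/- Assume χ_N ≤ χ_S. Then the following inequality between mean algebraic run lengths holds: (1/2) · ( (v_K − c)/T₊⁺ + (v_{−K} − c)/T₊⁻ ) ≤ Σ_k ω_k (v_k − c)/T₊(v_k − c). (This expresses that replacing the weights ω by the two-velocity weights (1/2, 0, …, 0, 1/2) can only decrease the mean algebraic run length on the right, ensuring uniform confinement along the interpolation of weights.) -/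
/-!
The run length `r(u) = u / T₊(u)` equals `min (u / T₊⁺) (u / T₊⁻)` because `T₊⁻ ≤ T₊⁺` when
`χ_N ≤ χ_S`, so it is a concave function of `u`. Pairing the velocities `v_k` and `v_{-k}`,
the mean run length is a weighted average of `g(v_k)` with `g(x) = r(x - c) + r(-x - c)`, which is
concave and even; on `[-v_K, v_K]` it is therefore smallest at the endpoints `±v_K`.
-/

open Set in
theorem ConcaveOn.add_apply_neg_sub_le_of_abs_le {f : ℝ → ℝ} (hf : ConcaveOn ℝ univ f)
    (c : ℝ) {x V : ℝ} (hx : |x| ≤ V) : f (V - c) + f (-V - c) ≤ f (x - c) + f (-x - c) := by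
  have hg : ConcaveOn ℝ univ (fun y => f (y - c) + f (-y - c)) :=
    (hf.comp_affineMap (AffineMap.id ℝ ℝ - AffineMap.const ℝ ℝ c)).add
      (hf.comp_affineMap (-AffineMap.id ℝ ℝ - AffineMap.const ℝ ℝ c))
  have := hg.min_le_of_mem_segment (mem_univ (-V)) (mem_univ V)
    (by rw [segment_eq_Icc (by linarith [abs_nonneg x])]; exact abs_le.mp hx)
  simpa [add_comm] using this

theorem Finset.sum_Icc_neg {M : Type*} [AddCommMonoid M] (n : ℤ) (f : ℤ → M) :
    ∑ k ∈ Finset.Icc (-n) n, f (-k) = ∑ k ∈ Finset.Icc (-n) n, f k :=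
  Finset.sum_nbij' Neg.neg Neg.neg (by intro k; simp; omega) (by intro k; simp; omega)
    (by simp) (by simp) (by simp)

theorem ConcaveOn.add_apply_neg_sub_le_two_mul_sum_Icc {f : ℝ → ℝ} (hf : ConcaveOn ℝ Set.univ f)
    (c : ℝ) (n : ℕ) {v ω : ℤ → ℝ}
    (hvodd : ∀ k ∈ Finset.Icc (-(n:ℤ)) n, v (-k) = -v k)
    (hvmono : MonotoneOn v (Finset.Icc (-(n:ℤ)) n))
    (hωeven : ∀ k ∈ Finset.Icc (-(n:ℤ)) n, ω (-k) = ω k)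
    (hωnonneg : ∀ k ∈ Finset.Icc (-(n:ℤ)) n, 0 ≤ ω k)
    (hωsum : ∑ k ∈ Finset.Icc (-(n:ℤ)) n, ω k = 1) :
    f (v n - c) + f (-v n - c) ≤ 2 * ∑ k ∈ Finset.Icc (-(n:ℤ)) n, ω k * f (v k - c) := by
  set I := Finset.Icc (-(n:ℤ)) n
  have hn : (n:ℤ) ∈ I := Finset.mem_Icc.mpr ⟨by omega, le_rfl⟩
  have hpair (k) (hk : k ∈ I) : f (v n - c) + f (-v n - c) ≤ f (v k - c) + f (-v k - c) := by
    obtain ⟨hk₁, hk₂⟩ := Finset.mem_Icc.mp hk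
    have hvk : |v k| ≤ v n := abs_le.mpr
      ⟨hvodd n hn ▸ hvmono (Finset.mem_Icc.mpr ⟨le_rfl, by omega⟩) hk hk₁, hvmono hk hn hk₂⟩
    exact hf.add_apply_neg_sub_le_of_abs_le c hvk
  have hneg : ∑ k ∈ I, ω k * f (-v k - c) = ∑ k ∈ I, ω k * f (v k - c) := by
    rw [← Finset.sum_Icc_neg]
    exact Finset.sum_congr rfl fun k hk => by rw [hωeven k hk, hvodd k hk, neg_neg]
  calc f (v n - c) + f (-v n - c)
      = ∑ k ∈ I, ω k * (f (v n - c) + f (-v n - c)) := by rw [← Finset.sum_mul, hωsum, one_mul]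
    _ ≤ ∑ k ∈ I, ω k * (f (v k - c) + f (-v k - c)) :=
        Finset.sum_le_sum fun k hk => mul_le_mul_of_nonneg_left (hpair k hk) (hωnonneg k hk)
    _ = 2 * ∑ k ∈ I, ω k * f (v k - c) := by
        simp only [mul_add, Finset.sum_add_distrib, hneg]
        ring

theorem concaveOn_min_div (T₁ T₂ : ℝ) : ConcaveOn ℝ Set.univ (fun u => min (u / T₁) (u / T₂)) :=
  have h (T : ℝ) : ConcaveOn ℝ Set.univ (fun u : ℝ => u / T) :=
    LinearMap.concaveOn (LinearMap.mulRight ℝ T⁻¹) convex_univ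
  (h T₁).inf (h T₂)

theorem div_ite_pos_eq_min {T₁ T₂ : ℝ} (hT₂ : 0 < T₂) (hT : T₂ ≤ T₁) (u : ℝ) :
    u / (if 0 < u then T₁ else T₂) = min (u / T₁) (u / T₂) := by
  split_ifs with hu
  · exact (min_eq_left (div_le_div_of_nonneg_left hu.le hT₂ hT)).symm
  · refine (min_eq_right ?_).symm
    rw [div_le_div_iff₀ hT₂ (hT₂.trans_le hT)]
    nlinarith

theorem stmt17_general
    (K : ℕ)
    (v ω : ℤ → ℝ)
    (hvsym : ∀ k ∈ Finset.Icc (-(K:ℤ)) (K:ℤ), v (-k) = - v k)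
    (hvmono : ∀ j ∈ Finset.Icc (-(K:ℤ)) (K:ℤ), ∀ k ∈ Finset.Icc (-(K:ℤ)) (K:ℤ), j < k → v j < v k)
    (hwpos : ∀ k ∈ Finset.Icc (-(K:ℤ)) (K:ℤ), 0 < ω k)
    (hwsym : ∀ k ∈ Finset.Icc (-(K:ℤ)) (K:ℤ), ω (-k) = ω k)
    (hwsum : ∑ k ∈ Finset.Icc (-(K:ℤ)) (K:ℤ), ω k = 1)
    (χS χN : ℝ) (hχS : χS ∈ Set.Ioo 0 (1/2 : ℝ)) (hχN : χN ∈ Set.Ioo 0 (1/2 : ℝ))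
    (hχ : χN ≤ χS)
    (c : ℝ) (hc0 : 0 < c) (hcK : c < v (K:ℤ))
    (Tp : ℝ → ℝ)
    (hTpdef : ∀ u : ℝ, Tp u = if 0 < u then 1 + χS - χN else 1 - χS + χN) :
    (1/2 : ℝ) * ((v (K:ℤ) - c) / (1 + χS - χN) + (v (-(K:ℤ)) - c) / (1 - χS + χN)) ≤
      ∑ k ∈ Finset.Icc (-(K:ℤ)) (K:ℤ), ω k * (v k - c) / Tp (v k - c) := by
  set T₁ := 1 + χS - χN
  set T₂ := 1 - χS + χN
  have hT₂ : 0 < T₂ := by linarith [hχS.2, hχN.1]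
  have hT : T₂ ≤ T₁ := by linarith
  have hrun (u : ℝ) : u / Tp u = min (u / T₁) (u / T₂) := by
    rw [hTpdef, div_ite_pos_eq_min hT₂ hT]
  have hends : (v K - c) / T₁ + (v (-(K:ℤ)) - c) / T₂ =
      (v K - c) / Tp (v K - c) + (-v K - c) / Tp (-v K - c) := by
    rw [hvsym K (Finset.mem_Icc.mpr ⟨by omega, le_rfl⟩), hTpdef, hTpdef,
      if_pos (sub_pos.mpr hcK), if_neg (by linarith)]
  have key := (concaveOn_min_div T₁ T₂).add_apply_neg_sub_le_two_mul_sum_Icc c K hvsym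
    (StrictMonoOn.monotoneOn hvmono) hwsym (fun k hk => (hwpos k hk).le) hwsum
  simp only [← hrun, ← mul_div_assoc] at key
  linarith

theorem stmt17
    (K : ℕ) (hK : 1 ≤ K)
    (v ω : ℤ → ℝ)
    (hv0 : v 0 = 0)
    (hvsym : ∀ k ∈ Finset.Icc (-(K:ℤ)) (K:ℤ), v (-k) = - v k)
    (hvmono : ∀ j ∈ Finset.Icc (-(K:ℤ)) (K:ℤ), ∀ k ∈ Finset.Icc (-(K:ℤ)) (K:ℤ), j < k → v j < v k)
    (hwpos : ∀ k ∈ Finset.Icc (-(K:ℤ)) (K:ℤ), 0 < ω k)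
    (hwsym : ∀ k ∈ Finset.Icc (-(K:ℤ)) (K:ℤ), ω (-k) = ω k)
    (hwsum : ∑ k ∈ Finset.Icc (-(K:ℤ)) (K:ℤ), ω k = 1)
    (χS χN : ℝ) (hχS : χS ∈ Set.Ioo 0 (1/2 : ℝ)) (hχN : χN ∈ Set.Ioo 0 (1/2 : ℝ))
    (hχ : χN ≤ χS)
    (c : ℝ) (hc0 : 0 < c) (hcK : c < v (K:ℤ))
    (hcv : ∀ k ∈ Finset.Icc (-(K:ℤ)) (K:ℤ), c ≠ v k)
    (Tp : ℝ → ℝ)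
    (hTpdef : ∀ u : ℝ, Tp u = if 0 < u then 1 + χS - χN else 1 - χS + χN) :
    (1/2 : ℝ) * ((v (K:ℤ) - c) / (1 + χS - χN) + (v (-(K:ℤ)) - c) / (1 - χS + χN)) ≤
      ∑ k ∈ Finset.Icc (-(K:ℤ)) (K:ℤ), ω k * (v k - c) / Tp (v k - c) :=
  stmt17_general K v ω hvsym hvmono hwpos hwsym hwsum χS χN hχS hχN hχ c hc0 hcK Tp hTpdef
end
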